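/- arXiv:1204.0304 — 8 statements merged into one kernel-verified Lean document; each statement's English description precedes it below -/
import Mathlib

section
/- For a weighted digraph G with Laplacian matrix L, the following are equivalent: (i) G is weight-balanced (every vertex has equal weighted in-degree and out-degree), (ii) the row vector of all ones satisfies 1ᵀL = 0, and (iii) L + Lᵀ is positive semidefinite. -/
open Matrix

/-!
With `L = D_out - A` one has `L 𝟙 = 0`, while `𝟙ᵀ L` is the vector of differences `dᵢ⁺ - dᵢ⁻`
between weighted out- and in-degrees; this gives (i) ⇔ (ii). Expanding the quadratic form,
`xᵀ (L + Lᵀ) x = ∑ᵢⱼ aᵢⱼ (xᵢ - xⱼ)² + ∑ᵢ (dᵢ⁺ - dᵢ⁻) xᵢ²`, which is nonnegative for a balanced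
graph. Conversely, if `L + Lᵀ` is positive semidefinite then `𝟙ᵀ (L + Lᵀ) 𝟙 = 2 𝟙ᵀ L 𝟙 = 0`, so
`𝟙` lies in its kernel, and `(L + Lᵀ) 𝟙 = Lᵀ 𝟙` gives (ii).
-/

namespace Matrix

variable {ι R : Type*} [Fintype ι]

def IsWeightBalanced [AddCommMonoid R] (A : Matrix ι ι R) : Prop :=
  ∀ i, ∑ j, A i j = ∑ j, A j i

theorem dotProduct_add_transpose_mulVec [CommSemiring R] (M : Matrix ι ι R) (x : ι → R) :
    x ⬝ᵥ (M + Mᵀ) *ᵥ x = 2 * (x ⬝ᵥ M *ᵥ x) := by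
  rw [add_mulVec, dotProduct_add, mulVec_transpose, dotProduct_comm x (x ᵥ* M), ← dotProduct_mulVec,
    two_mul]

theorem one_vecMul_eq_zero_of_posSemidef_add_transpose {L : Matrix ι ι ℝ} (hL : L *ᵥ 1 = 0)
    (hpsd : (L + Lᵀ).PosSemidef) : 1 ᵥ* L = 0 := by
  have hquad : star 1 ⬝ᵥ (L + Lᵀ) *ᵥ 1 = 0 := by
    rw [star_trivial, dotProduct_add_transpose_mulVec, hL, dotProduct_zero, mul_zero]
  have hker : (L + Lᵀ) *ᵥ 1 = 1 ᵥ* L := by rw [add_mulVec, hL, zero_add, mulVec_transpose]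
  rw [← hker]
  exact (hpsd.dotProduct_mulVec_zero_iff 1).mp hquad

variable [DecidableEq ι]

section CommRing

variable [CommRing R] (A : Matrix ι ι R)

def outLaplacian : Matrix ι ι R :=
  diagonal (fun i => ∑ j, A i j) - A

theorem outLaplacian_mulVec_apply (x : ι → R) (i : ι) :
    (A.outLaplacian *ᵥ x) i = ∑ j, A i j * (x i - x j) := by
  rw [outLaplacian, sub_mulVec, Pi.sub_apply, mulVec_diagonal, Finset.sum_mul]
  simp only [mul_sub, Finset.sum_sub_distrib, mulVec, dotProduct]

theorem outLaplacian_mulVec_one : A.outLaplacian *ᵥ 1 = 0 := by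
  ext i
  simp [outLaplacian_mulVec_apply]

theorem one_vecMul_outLaplacian :
    1 ᵥ* A.outLaplacian = fun j => ∑ k, A j k - ∑ i, A i j := by
  ext j
  rw [outLaplacian, vecMul_sub, Pi.sub_apply, vecMul_diagonal, Pi.one_apply, one_mul]
  simp [vecMul, dotProduct]

theorem one_vecMul_outLaplacian_eq_zero_iff :
    1 ᵥ* A.outLaplacian = 0 ↔ A.IsWeightBalanced := by
  simp only [one_vecMul_outLaplacian, funext_iff, Pi.zero_apply, sub_eq_zero, IsWeightBalanced]

theorem two_mul_dotProduct_outLaplacian_mulVec (x : ι → R) :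
    2 * (x ⬝ᵥ A.outLaplacian *ᵥ x) =
      ∑ i, ∑ j, A i j * (x i - x j) ^ 2 + ∑ i, (∑ j, A i j - ∑ j, A j i) * x i ^ 2 := by
  have hdeg : ∑ i, ∑ j, A i j * (x i ^ 2 - x j ^ 2) =
      ∑ i, (∑ j, A i j - ∑ j, A j i) * x i ^ 2 := by
    simp only [mul_sub, Finset.sum_sub_distrib, sub_mul, Finset.sum_mul]
    rw [Finset.sum_comm (f := fun i j => A i j * x j ^ 2)]
  calc 2 * (x ⬝ᵥ A.outLaplacian *ᵥ x)
      = ∑ i, ∑ j, (A i j * (x i - x j) ^ 2 + A i j * (x i ^ 2 - x j ^ 2)) := by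
        simp only [dotProduct, outLaplacian_mulVec_apply, Finset.mul_sum]
        exact Finset.sum_congr rfl fun i _ => Finset.sum_congr rfl fun j _ => by ring
    _ = _ := by simp only [Finset.sum_add_distrib, hdeg]

end CommRing

theorem IsWeightBalanced.posSemidef_outLaplacian_add_transpose {A : Matrix ι ι ℝ}
    (hA : ∀ i j, 0 ≤ A i j) (hbal : A.IsWeightBalanced) :
    (A.outLaplacian + A.outLaplacianᵀ).PosSemidef := by
  refine posSemidef_iff_dotProduct_mulVec.mpr ⟨?_, fun x => ?_⟩
  · simp [IsHermitian, add_comm]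
  · rw [star_trivial, dotProduct_add_transpose_mulVec, two_mul_dotProduct_outLaplacian_mulVec]
    simp only [fun i => sub_eq_zero.mpr (hbal i), zero_mul, Finset.sum_const_zero, add_zero]
    exact Finset.sum_nonneg fun i _ => Finset.sum_nonneg fun j _ => mul_nonneg (hA i j) (sq_nonneg _)

end Matrix

/-- For a weighted digraph `G` with nonnegative adjacency matrix `A` and
Laplacian `L = D_out − A`, the following are equivalent:
(i) `G` is weight-balanced, (ii) `𝟙ᵀ L = 0`, (iii) `L + Lᵀ` is positive semidefinite. -/
theorem weight_balanced_tfae {n : ℕ} (A : Matrix (Fin n) (Fin n) ℝ)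
    (hA : ∀ i j, 0 ≤ A i j)
    (L : Matrix (Fin n) (Fin n) ℝ)
    (hL : L = Matrix.diagonal (fun i => ∑ j, A i j) - A) :
    ((∀ i, ∑ j, A i j = ∑ j, A j i) ↔ (fun _ => (1 : ℝ)) ᵥ* L = 0) ∧
    ((∀ i, ∑ j, A i j = ∑ j, A j i) ↔ (L + Lᵀ).PosSemidef) := by
  obtain rfl : L = A.outLaplacian := hL
  have hbal_iff : 1 ᵥ* A.outLaplacian = 0 ↔ A.IsWeightBalanced :=
    A.one_vecMul_outLaplacian_eq_zero_iff
  refine ⟨hbal_iff.symm, fun hbal => IsWeightBalanced.posSemidef_outLaplacian_add_transpose hA hbal,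
    fun hpsd => hbal_iff.mp ?_⟩
  exact one_vecMul_eq_zero_of_posSemidef_add_transpose A.outLaplacian_mulVec_one hpsd
end

section
/- If (𝐱*, 𝐳*) is a saddle point of F(𝐱, 𝐳) = f̃(𝐱) + 𝐱ᵀ𝐋𝐳 + ½ 𝐱ᵀ𝐋𝐱, where G is strongly connected and weight-balanced, then 𝐱* = 1_n ⊗ x* for some x* ∈ ℝ^d which is a global minimizer of f(x) = Σ_{i=1}^n f^i(x). -/
open Matrix BigOperators

/-!
At a saddle point, `𝐳 ↦ F(𝐱*, 𝐳)` is maximised at `𝐳*`; since it is affine in `𝐳`, its linear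
part `𝐱*ᵀ𝐋` must vanish. Block by block this says `x_qᵀ L = 0` for each coordinate `q`, and for
a weight-balanced digraph `(vᵀL)_j = ∑ᵢ a_ij (v_j - v_i)`, so by the maximum principle along
the edges of a strongly connected digraph each `x_q` is constant: `𝐱* = 1 ⊗ x*`. Weight balance
also gives `(1 ⊗ y)ᵀ𝐋 = 0`, so comparing `F(𝐱*, 𝐳*) ≤ F(1 ⊗ y, 𝐳*)` leaves `f(x*) ≤ f(y)`.
-/

section Laplacian

variable {ι R : Type*} [Fintype ι] [DecidableEq ι]

def weightedLaplacian [AddCommGroup R] (A : Matrix ι ι R) : Matrix ι ι R :=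
  diagonal (fun i => ∑ j, A i j) - A

theorem vecMul_weightedLaplacian_apply [CommRing R] {A : Matrix ι ι R}
    (hbal : ∀ i, ∑ j, A i j = ∑ j, A j i) (v : ι → R) (j : ι) :
    (v ᵥ* weightedLaplacian A) j = ∑ i, A i j * (v j - v i) := by
  rw [weightedLaplacian, vecMul_sub, Pi.sub_apply, vecMul_diagonal, hbal j]
  simp only [vecMul, dotProduct, mul_sub, Finset.sum_sub_distrib, Finset.mul_sum, mul_comm]

variable [CommRing R] [LinearOrder R] [IsStrictOrderedRing R]

omit [DecidableEq ι] in
/-- Maximum principle: when `v b` is maximal, every term of the vanishing sum is nonnegative. -/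
theorem eq_of_sum_mul_sub_eq_zero_of_forall_le {A : Matrix ι ι R} (hA : ∀ i j, 0 ≤ A i j)
    {v : ι → R} {b : ι} (hmax : ∀ i, v i ≤ v b) (hb : ∑ i, A i b * (v b - v i) = 0) {a : ι}
    (hab : 0 < A a b) : v a = v b := by
  have hterm : ∀ i ∈ Finset.univ, 0 ≤ A i b * (v b - v i) := fun i _ =>
    mul_nonneg (hA i b) (sub_nonneg.2 (hmax i))
  have := (Finset.sum_eq_zero_iff_of_nonneg hterm).1 hb a (Finset.mem_univ a)
  rcases mul_eq_zero.1 this with h | h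
  · exact absurd h hab.ne'
  · exact (sub_eq_zero.1 h).symm

theorem eq_of_vecMul_weightedLaplacian_eq_zero {A : Matrix ι ι R} (hA : ∀ i j, 0 ≤ A i j)
    (hconn : ∀ i j : ι, i ≠ j → Relation.TransGen (fun a b => 0 < A a b) i j)
    (hbal : ∀ i, ∑ j, A i j = ∑ j, A j i) {v : ι → R} (hv : v ᵥ* weightedLaplacian A = 0)
    (i j : ι) : v i = v j := by
  have hv' : ∀ b, ∑ i, A i b * (v b - v i) = 0 := fun b => by
    rw [← vecMul_weightedLaplacian_apply hbal, hv, Pi.zero_apply]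
  obtain ⟨m, -, hm⟩ := Finset.exists_max_image Finset.univ v ⟨i, Finset.mem_univ i⟩
  have hmax : ∀ a, v a = v m := by
    intro a
    rcases eq_or_ne a m with rfl | ham
    · rfl
    refine Relation.TransGen.head_induction_on (hconn a m ham)
      (fun hab => eq_of_sum_mul_sub_eq_zero_of_forall_le hA (fun i => hm i (Finset.mem_univ i))
        (hv' m) hab)
      (fun hab _ hb => (eq_of_sum_mul_sub_eq_zero_of_forall_le hA ?_ (hv' _) hab).trans hb)
    exact fun i => hb ▸ hm i (Finset.mem_univ i)
  rw [hmax i, hmax j]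

end Laplacian

section Kronecker

variable {ι κ R : Type*} [Fintype ι] [Fintype κ] [DecidableEq κ]

theorem vecMul_kroneckerMap_one_apply [Semiring R] (L : Matrix ι ι R) (X : ι × κ → R) (j : ι)
    (q : κ) :
    (X ᵥ* kroneckerMap (· * ·) L (1 : Matrix κ κ R)) (j, q) = ((fun i => X (i, q)) ᵥ* L) j := by
  simp [vecMul, dotProduct, Fintype.sum_prod_type, one_apply]

variable [DecidableEq ι] [CommRing R]

theorem const_vecMul_kroneckerMap_weightedLaplacian {A : Matrix ι ι R}
    (hbal : ∀ i, ∑ j, A i j = ∑ j, A j i) (y : κ → R) :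
    (fun p : ι × κ => y p.2) ᵥ* kroneckerMap (· * ·) (weightedLaplacian A) (1 : Matrix κ κ R)
      = 0 := by
  funext ⟨j, q⟩
  simp [vecMul_kroneckerMap_one_apply, vecMul_weightedLaplacian_apply hbal]

theorem exists_eq_const_of_vecMul_kroneckerMap_weightedLaplacian_eq_zero [LinearOrder R]
    [IsStrictOrderedRing R] {A : Matrix ι ι R} (hA : ∀ i j, 0 ≤ A i j)
    (hconn : ∀ i j : ι, i ≠ j → Relation.TransGen (fun a b => 0 < A a b) i j)
    (hbal : ∀ i, ∑ j, A i j = ∑ j, A j i) {X : ι × κ → R}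
    (hX : X ᵥ* kroneckerMap (· * ·) (weightedLaplacian A) (1 : Matrix κ κ R) = 0) :
    ∃ x : κ → R, X = fun p => x p.2 := by
  cases isEmpty_or_nonempty ι with
  | inl _ => exact ⟨0, funext fun p => isEmptyElim p.1⟩
  | inr h =>
    obtain ⟨i₀⟩ := h
    refine ⟨fun q => X (i₀, q), funext fun ⟨i, q⟩ => ?_⟩
    refine eq_of_vecMul_weightedLaplacian_eq_zero hA hconn hbal (v := fun i => X (i, q)) ?_ i i₀
    funext j
    rw [← vecMul_kroneckerMap_one_apply, hX, Pi.zero_apply, Pi.zero_apply]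

end Kronecker

theorem eq_zero_of_forall_dotProduct_le {ι R : Type*} [Fintype ι] [DecidableEq ι] [CommRing R]
    [LinearOrder R] [IsStrictOrderedRing R] {v : ι → R} (z₀ : ι → R)
    (h : ∀ z, v ⬝ᵥ z ≤ v ⬝ᵥ z₀) : v = 0 := by
  funext j
  have h₁ := h (z₀ + Pi.single j 1)
  have h₂ := h (z₀ - Pi.single j 1)
  rw [dotProduct_add, dotProduct_single, mul_one] at h₁
  rw [dotProduct_sub, dotProduct_single, mul_one] at h₂
  rw [Pi.zero_apply]
  exact le_antisymm (by linarith) (by linarith)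

theorem saddle_point_gives_minimizer_general
    {n d : ℕ} (A : Matrix (Fin n) (Fin n) ℝ)
    (hA : ∀ i j, 0 ≤ A i j)
    (hconn : ∀ i j : Fin n, i ≠ j → Relation.TransGen (fun a b => 0 < A a b) i j)
    (hbal : ∀ i, ∑ j, A i j = ∑ j, A j i)
    (L : Matrix (Fin n) (Fin n) ℝ)
    (hL : L = Matrix.diagonal (fun i => ∑ j, A i j) - A)
    (BL : Matrix (Fin n × Fin d) (Fin n × Fin d) ℝ)
    (hBL : BL = Matrix.kroneckerMap (· * ·) L (1 : Matrix (Fin d) (Fin d) ℝ))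
    (f : Fin n → (Fin d → ℝ) → ℝ)
    (F : (Fin n × Fin d → ℝ) → (Fin n × Fin d → ℝ) → ℝ)
    (hF : F = fun X Z => (∑ i, f i (fun j => X (i, j))) + X ⬝ᵥ (BL *ᵥ Z)
        + (1 / 2) * (X ⬝ᵥ (BL *ᵥ X)))
    (Xs Zs : Fin n × Fin d → ℝ)
    (hsaddle : ∀ X Z, F Xs Z ≤ F Xs Zs ∧ F Xs Zs ≤ F X Zs) :
    ∃ xs : Fin d → ℝ, Xs = (fun p => xs p.2) ∧ ∀ y : Fin d → ℝ, ∑ i, f i xs ≤ ∑ i, f i y := by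
  obtain rfl : L = weightedLaplacian A := hL
  subst hBL hF
  have hXs := eq_zero_of_forall_dotProduct_le Zs fun Z => by
    have := (hsaddle Xs Z).1
    simp only [dotProduct_mulVec] at this
    linarith
  obtain ⟨xs, rfl⟩ :=
    exists_eq_const_of_vecMul_kroneckerMap_weightedLaplacian_eq_zero hA hconn hbal hXs
  refine ⟨xs, rfl, fun y => ?_⟩
  simpa only [dotProduct_mulVec, hXs, const_vecMul_kroneckerMap_weightedLaplacian hbal,
    zero_dotProduct, mul_zero, add_zero] using (hsaddle (fun p => y p.2) Zs).2

/-- If `(𝐱*, 𝐳*)` is a saddle point of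
`F(𝐱,𝐳) = f̃(𝐱) + 𝐱ᵀ𝐋𝐳 + ½𝐱ᵀ𝐋𝐱`, where the digraph is strongly connected and
weight-balanced, then `𝐱* = 1_n ⊗ x*` for some `x* ∈ ℝ^d` which is a global
minimizer of `f = ∑ i, f^i`. -/
theorem saddle_point_gives_minimizer
    {n d : ℕ} (A : Matrix (Fin n) (Fin n) ℝ)
    (hA : ∀ i j, 0 ≤ A i j)
    (hconn : ∀ i j : Fin n, i ≠ j → Relation.TransGen (fun a b => 0 < A a b) i j)
    (hbal : ∀ i, ∑ j, A i j = ∑ j, A j i)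
    (L : Matrix (Fin n) (Fin n) ℝ)
    (hL : L = Matrix.diagonal (fun i => ∑ j, A i j) - A)
    (BL : Matrix (Fin n × Fin d) (Fin n × Fin d) ℝ)
    (hBL : BL = Matrix.kroneckerMap (· * ·) L (1 : Matrix (Fin d) (Fin d) ℝ))
    (f : Fin n → (Fin d → ℝ) → ℝ)
    (hconv : ∀ i, ConvexOn ℝ Set.univ (f i))
    (hlip : ∀ i, LocallyLipschitz (f i))
    (F : (Fin n × Fin d → ℝ) → (Fin n × Fin d → ℝ) → ℝ)
    (hF : F = fun X Z => (∑ i, f i (fun j => X (i, j))) + X ⬝ᵥ (BL *ᵥ Z)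
        + (1 / 2) * (X ⬝ᵥ (BL *ᵥ X)))
    (Xs Zs : Fin n × Fin d → ℝ)
    (hsaddle : ∀ X Z, F Xs Z ≤ F Xs Zs ∧ F Xs Zs ≤ F X Zs) :
    ∃ xs : Fin d → ℝ, Xs = (fun p => xs p.2) ∧ ∀ y : Fin d → ℝ, ∑ i, f i xs ≤ ∑ i, f i y :=
  saddle_point_gives_minimizer_general A hA hconn hbal L hL BL hBL f F hF Xs Zs hsaddle
end

section
/- If 𝐱* = 1_n ⊗ x* is a solution of the constrained problem (i.e., x* minimizes f = Σ_i f^i), then there exists 𝐳* ∈ ℝ^{nd} with 𝐋𝐳* ∈ −∂f̃(𝐱*) such that (𝐱*, 𝐳*) is a saddle point of F(𝐱, 𝐳) = f̃(𝐱) + 𝐱ᵀ𝐋𝐳 + ½ 𝐱ᵀ𝐋𝐱. -/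
open Matrix BigOperators

/-- The subdifferential of `g : (ι → ℝ) → ℝ` at `x`, with respect to the dot product. -/
def subdiff {ι : Type*} [Fintype ι] (g : (ι → ℝ) → ℝ) (x : ι → ℝ) : Set (ι → ℝ) :=
  {v | ∀ y, g x + v ⬝ᵥ (y - x) ≤ g y}

/-!
At `𝐱* = 1 ⊗ x*` the function `f̃` is minimal on the consensus subspace `{1 ⊗ x}`. Separating the
open strict epigraph of `f̃` from the slice `{(1 ⊗ x, f̃ 𝐱*)}` gives a subgradient `g ∈ ∂f̃(𝐱*)`
orthogonal to consensus, i.e. every coordinate of `g` sums to zero over the nodes.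

For a strongly connected graph the maximum principle shows `ker L = ℝ 1`; weight balance puts
`range L` inside `1ᗮ`, so by counting dimensions `range L = 1ᗮ` and `𝐋 𝐳* = -g` is solvable.
Weight balance also gives `1ᵀ L = 0` and `xᵀ L x = ½ ∑ a_ij (x_i - x_j)² ≥ 0`. Hence `F(𝐱*, ·)` is
constant, and `F(𝐱, 𝐳*) - F(𝐱*, 𝐳*)` is the subgradient gap plus `½ 𝐱ᵀ𝐋𝐱`, both nonnegative.
-/

theorem LinearMap.apply_eq_zero_of_forall_le {F : Type*} [AddCommGroup F] [Module ℝ F]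
    {V : Submodule ℝ F} {ψ : F →ₗ[ℝ] ℝ} {u : ℝ} (h : ∀ v ∈ V, u ≤ ψ v) {v : F} (hv : v ∈ V) :
    ψ v = 0 := by
  by_contra hψ
  have := h (((u - 1) / ψ v) • v) (V.smul_mem _ hv)
  rw [map_smul, smul_eq_mul, div_mul_cancel₀ _ hψ] at this
  linarith

theorem ConvexOn.exists_subgradient_of_isMinOn_submodule {E : Type*} [AddCommGroup E]
    [Module ℝ E] [TopologicalSpace E] [IsTopologicalAddGroup E] [ContinuousSMul ℝ E] {g : E → ℝ}
    (hg : ConvexOn ℝ Set.univ g) (hcont : Continuous g) {V : Submodule ℝ E} {x : E}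
    (hx : x ∈ V) (hmin : IsMinOn g V x) :
    ∃ φ : StrongDual ℝ E, (∀ y, g x + φ (y - x) ≤ g y) ∧ ∀ v ∈ V, φ v = 0 := by
  -- The hyperplane separating the strict epigraph from `V × {g x}` has normal `(ψ, c)` with
  -- `c < 0` and `ψ = 0` on `V`; then `-ψ / c` is the subgradient.
  have hopen : IsOpen {p : E × ℝ | p.1 ∈ Set.univ ∧ g p.1 < p.2} := by
    simpa using isOpen_lt (hcont.comp continuous_fst) continuous_snd
  have hdisj : Disjoint {p : E × ℝ | p.1 ∈ Set.univ ∧ g p.1 < p.2} ((V : Set E) ×ˢ {g x}) := by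
    rw [Set.disjoint_left]
    rintro ⟨v, t⟩ ⟨-, hlt⟩ ⟨hv, rfl : t = g x⟩
    exact (isMinOn_iff.1 hmin v hv).not_gt hlt
  obtain ⟨φ, u, hlt, hle⟩ := geometric_hahn_banach_open hg.convex_strict_epigraph hopen
    (V.convex.prod (convex_singleton _)) hdisj
  set ψ := φ.comp (ContinuousLinearMap.inl ℝ E ℝ)
  set c := φ (0, 1)
  have hsplit : ∀ y t, φ (y, t) = ψ y + t * c := fun y t => by
    rw [show ((y, t) : E × ℝ) = (y, 0) + t • (0, 1) by simp, map_add, map_smul, smul_eq_mul]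
    rfl
  have hlt' : ∀ y t, g y < t → ψ y + t * c < u := fun y t h => hsplit y t ▸ hlt _ ⟨trivial, h⟩
  have hle' : ∀ v ∈ V, u ≤ ψ v + g x * c := fun v hv => hsplit v _ ▸ hle _ ⟨hv, rfl⟩
  have hψV : ∀ v ∈ V, ψ v = 0 := fun v hv =>
    LinearMap.apply_eq_zero_of_forall_le (ψ := ψ.toLinearMap) (u := u - g x * c)
      (fun w hw => by have := hle' w hw; simp only [ContinuousLinearMap.coe_coe]; linarith) hv
  have hu : u ≤ g x * c := by simpa [hψV x hx] using hle' x hx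
  have hc : c < 0 := by
    have := hlt' x (g x + 1) (by linarith)
    rw [hψV x hx] at this
    linarith
  have hbound : ∀ y, ψ y + g y * c ≤ u := fun y => by
    by_contra! h
    have := hlt' y ((u - ψ y) / c) (by rw [lt_div_iff_of_neg hc]; linarith)
    rw [div_mul_cancel₀ _ hc.ne] at this
    linarith
  refine ⟨(-c)⁻¹ • ψ, fun y => ?_, fun v hv => by simp [hψV v hv]⟩
  have hy : ψ y ≤ (-c) * (g y - g x) := by nlinarith [hbound y]
  change g x + (-c)⁻¹ * ψ (y - x) ≤ g y
  rw [map_sub, hψV x hx, sub_zero, ← le_sub_iff_add_le', inv_mul_le_iff₀ (by linarith)]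
  linarith

theorem ConvexOn.finset_sum {𝕜 E β ι : Type*} [Semiring 𝕜] [PartialOrder 𝕜] [AddCommMonoid E]
    [AddCommMonoid β] [PartialOrder β] [IsOrderedAddMonoid β] [SMul 𝕜 E] [Module 𝕜 β]
    {s : Set E} (hs : Convex 𝕜 s) (t : Finset ι) {g : ι → E → β}
    (hg : ∀ i ∈ t, ConvexOn 𝕜 s (g i)) : ConvexOn 𝕜 s fun x => ∑ i ∈ t, g i x := by
  classical
  induction t using Finset.induction_on with
  | empty => simpa using convexOn_const 0 hs
  | insert a t ha ih =>
    simp only [Finset.sum_insert ha]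
    exact (hg a (t.mem_insert_self a)).add (ih fun i hi => hg i (Finset.mem_insert_of_mem hi))

theorem exists_mem_subdiff_orthogonal_consensus {ι κ : Type*} [Fintype ι] [Fintype κ]
    {f : ι → (κ → ℝ) → ℝ} (hconv : ∀ i, ConvexOn ℝ Set.univ (f i)) {xs : κ → ℝ}
    (hmin : ∀ y, ∑ i, f i xs ≤ ∑ i, f i y) :
    ∃ G ∈ subdiff (fun X : ι × κ → ℝ => ∑ i, f i fun j => X (i, j)) (fun p => xs p.2),
      ∀ x : κ → ℝ, (fun p => x p.2) ⬝ᵥ G = 0 := by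
  classical
  have hconv_sum : ConvexOn ℝ Set.univ fun X : ι × κ → ℝ => ∑ i, f i fun j => X (i, j) :=
    ConvexOn.finset_sum convex_univ _ fun i _ =>
      (hconv i).comp_linearMap (LinearMap.funLeft ℝ ℝ (Prod.mk i))
  have hcont_sum : Continuous fun X : ι × κ → ℝ => ∑ i, f i fun j => X (i, j) :=
    continuous_finsetSum _ fun i _ =>
      (continuousOn_univ.1 ((hconv i).continuousOn isOpen_univ)).comp (by fun_prop)
  have hconsensus : ∀ x : κ → ℝ,
      (fun p : ι × κ => x p.2) ∈ LinearMap.range (LinearMap.funLeft ℝ ℝ Prod.snd) :=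
    fun x => ⟨x, rfl⟩
  obtain ⟨φ, hφ, hφV⟩ := hconv_sum.exists_subgradient_of_isMinOn_submodule hcont_sum
    (hconsensus xs) (isMinOn_iff.2 <| by rintro _ ⟨y, rfl⟩; simpa using hmin y)
  set G := (dotProductEquiv ℝ _).symm φ.toLinearMap
  have hG : ∀ Y, G ⬝ᵥ Y = φ Y := LinearMap.congr_fun ((dotProductEquiv ℝ _).apply_symm_apply _)
  exact ⟨G, fun Y => (hG _).symm ▸ hφ Y,
    fun x => by rw [dotProduct_comm, hG, hφV _ (hconsensus x)]⟩

section Laplacian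

variable {ι : Type*} [Fintype ι] [DecidableEq ι]

def graphLaplacian (A : Matrix ι ι ℝ) : Matrix ι ι ℝ :=
  diagonal (fun i => ∑ j, A i j) - A

variable {A : Matrix ι ι ℝ}

theorem graphLaplacian_mulVec_apply (v : ι → ℝ) (i : ι) :
    (graphLaplacian A *ᵥ v) i = ∑ j, A i j * (v i - v j) := by
  rw [graphLaplacian, sub_mulVec, Pi.sub_apply, mulVec_diagonal]
  simp only [mulVec, dotProduct, Finset.sum_mul, mul_sub, Finset.sum_sub_distrib]

theorem sum_graphLaplacian_mulVec (hbal : ∀ i, ∑ j, A i j = ∑ j, A j i) (v : ι → ℝ) :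
    ∑ i, (graphLaplacian A *ᵥ v) i = 0 := by
  simp only [graphLaplacian_mulVec_apply, mul_sub, Finset.sum_sub_distrib]
  rw [Finset.sum_comm (f := fun i j => A i j * v j)]
  simp only [← Finset.sum_mul, hbal, sub_self]

theorem dotProduct_graphLaplacian_mulVec_self (hbal : ∀ i, ∑ j, A i j = ∑ j, A j i)
    (v : ι → ℝ) : v ⬝ᵥ (graphLaplacian A *ᵥ v) = (1 / 2) * ∑ i, ∑ j, A i j * (v i - v j) ^ 2 := by
  have hdiag : ∑ i, ∑ j, A i j * v j ^ 2 = ∑ i, ∑ j, A i j * v i ^ 2 := by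
    rw [Finset.sum_comm]
    simp only [← Finset.sum_mul, hbal]
  have hexpand : ∑ i, ∑ j, A i j * (v i - v j) ^ 2 =
      ∑ i, ∑ j, A i j * v i ^ 2 + ∑ i, ∑ j, A i j * v j ^ 2
        - 2 * ∑ i, ∑ j, A i j * (v i * v j) := by
    simp only [Finset.mul_sum, ← Finset.sum_add_distrib, ← Finset.sum_sub_distrib]
    exact Finset.sum_congr rfl fun i _ => Finset.sum_congr rfl fun j _ => by ring
  have hform : v ⬝ᵥ (graphLaplacian A *ᵥ v) =
      ∑ i, ∑ j, A i j * v i ^ 2 - ∑ i, ∑ j, A i j * (v i * v j) := by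
    simp only [dotProduct, graphLaplacian_mulVec_apply, Finset.mul_sum, ← Finset.sum_sub_distrib]
    exact Finset.sum_congr rfl fun i _ => Finset.sum_congr rfl fun j _ => by ring
  rw [hform, hexpand, hdiag]
  ring

theorem dotProduct_graphLaplacian_mulVec_self_nonneg (hA : ∀ i j, 0 ≤ A i j)
    (hbal : ∀ i, ∑ j, A i j = ∑ j, A j i) (v : ι → ℝ) :
    0 ≤ v ⬝ᵥ (graphLaplacian A *ᵥ v) := by
  rw [dotProduct_graphLaplacian_mulVec_self hbal]
  exact mul_nonneg (by norm_num) <| Finset.sum_nonneg fun i _ => Finset.sum_nonneg fun j _ =>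
    mul_nonneg (hA i j) (sq_nonneg _)

theorem eq_of_graphLaplacian_mulVec_eq_zero (hA : ∀ i j, 0 ≤ A i j)
    (hconn : ∀ i j, i ≠ j → Relation.TransGen (fun a b => 0 < A a b) i j) {v : ι → ℝ}
    (hv : graphLaplacian A *ᵥ v = 0) (i j : ι) : v i = v j := by
  obtain ⟨i₀, -, hmax⟩ := Finset.exists_max_image Finset.univ v ⟨i, Finset.mem_univ i⟩
  have hstep : ∀ a b, v a = v i₀ → 0 < A a b → v b = v i₀ := by
    intro a b ha hab
    have hterm : ∀ k ∈ Finset.univ, 0 ≤ A a k * (v a - v k) := fun k _ =>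
      mul_nonneg (hA a k) (by linarith [hmax k (Finset.mem_univ k)])
    have hzero := (Finset.sum_eq_zero_iff_of_nonneg hterm).1
      (by rw [← graphLaplacian_mulVec_apply, hv, Pi.zero_apply]) b (Finset.mem_univ b)
    linarith [(mul_eq_zero.1 hzero).resolve_left hab.ne']
  have hreach : ∀ k, Relation.TransGen (fun a b => 0 < A a b) i₀ k → v k = v i₀ := by
    intro k hk
    induction hk with
    | single hab => exact hstep _ _ rfl hab
    | tail _ hbc ih => exact hstep _ _ ih hbc
  have hall : ∀ k, v k = v i₀ := fun k => by
    rcases eq_or_ne i₀ k with rfl | hk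
    · rfl
    · exact hreach k (hconn i₀ k hk)
  rw [hall i, hall j]

theorem exists_graphLaplacian_mulVec_eq (hA : ∀ i j, 0 ≤ A i j)
    (hconn : ∀ i j, i ≠ j → Relation.TransGen (fun a b => 0 < A a b) i j)
    (hbal : ∀ i, ∑ j, A i j = ∑ j, A j i) {w : ι → ℝ} (hw : ∑ i, w i = 0) :
    ∃ z, graphLaplacian A *ᵥ z = w := by
  cases isEmpty_or_nonempty ι
  · exact ⟨0, Subsingleton.elim _ _⟩
  obtain ⟨i₀⟩ := ‹Nonempty ι›
  set T := (graphLaplacian A).mulVecLin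
  set σ : Module.Dual ℝ (ι → ℝ) := dotProductEquiv ℝ ι 1
  have hσ : ∀ v, σ v = ∑ i, v i := fun v => by simp [σ, one_dotProduct]
  have hrange : LinearMap.range T ≤ LinearMap.ker σ := by
    rintro _ ⟨z, rfl⟩
    simpa [hσ, T] using sum_graphLaplacian_mulVec hbal z
  have hker : LinearMap.ker T ≤ ℝ ∙ (1 : ι → ℝ) := fun v hv =>
    Submodule.mem_span_singleton.2 ⟨v i₀, funext fun i =>
      by simpa using eq_of_graphLaplacian_mulVec_eq_zero hA hconn hv i₀ i⟩
  have hσ_ne : σ ≠ 0 := fun h => by simpa [hσ] using LinearMap.congr_fun h (Pi.single i₀ 1)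
  have hdimT := T.finrank_range_add_finrank_ker
  have hdimσ := Module.Dual.finrank_ker_add_one_of_ne_zero hσ_ne
  have hdim1 := (Submodule.finrank_mono hker).trans_eq (finrank_span_singleton one_ne_zero)
  have heq : LinearMap.range T = LinearMap.ker σ :=
    Submodule.eq_of_le_of_finrank_le hrange (by omega)
  obtain ⟨z, hz⟩ : w ∈ LinearMap.range T := heq ▸ (hσ w ▸ hw : σ w = 0)
  exact ⟨z, hz⟩

end Laplacian

section Blocks

variable {R ι κ : Type*} [Fintype ι] [Fintype κ]

theorem dotProduct_prod_eq_sum_dotProduct [NonUnitalNonAssocSemiring R] (X Y : ι × κ → R) :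
    X ⬝ᵥ Y = ∑ j, (fun i => X (i, j)) ⬝ᵥ fun i => Y (i, j) := by
  simp only [dotProduct, Fintype.sum_prod_type]
  exact Finset.sum_comm

theorem comp_snd_dotProduct [NonUnitalNonAssocSemiring R] (x : κ → R) (Y : ι × κ → R) :
    (fun p => x p.2) ⬝ᵥ Y = x ⬝ᵥ fun j => ∑ i, Y (i, j) := by
  simp only [dotProduct, Fintype.sum_prod_type, Finset.mul_sum]
  exact Finset.sum_comm

theorem kroneckerMap_one_mulVec_apply [NonAssocSemiring R] [DecidableEq κ] {ι' : Type*}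
    (M : Matrix ι' ι R) (Z : ι × κ → R) (i : ι') (j : κ) :
    (kroneckerMap (· * ·) M (1 : Matrix κ κ R) *ᵥ Z) (i, j) = (M *ᵥ fun k => Z (k, j)) i := by
  simp [mulVec, dotProduct, Fintype.sum_prod_type, one_apply]

end Blocks

section LaplacianBlocks

variable {ι κ : Type*} [Fintype ι] [DecidableEq ι] [Fintype κ] [DecidableEq κ]
  {A : Matrix ι ι ℝ}

theorem comp_snd_dotProduct_kroneckerMap_graphLaplacian_mulVec
    (hbal : ∀ i, ∑ j, A i j = ∑ j, A j i) (x : κ → ℝ) (Z : ι × κ → ℝ) :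
    (fun p => x p.2) ⬝ᵥ (kroneckerMap (· * ·) (graphLaplacian A) (1 : Matrix κ κ ℝ) *ᵥ Z) = 0 := by
  simp [comp_snd_dotProduct, kroneckerMap_one_mulVec_apply, sum_graphLaplacian_mulVec hbal]

theorem dotProduct_kroneckerMap_graphLaplacian_mulVec_self_nonneg (hA : ∀ i j, 0 ≤ A i j)
    (hbal : ∀ i, ∑ j, A i j = ∑ j, A j i) (X : ι × κ → ℝ) :
    0 ≤ X ⬝ᵥ (kroneckerMap (· * ·) (graphLaplacian A) (1 : Matrix κ κ ℝ) *ᵥ X) := by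
  rw [dotProduct_prod_eq_sum_dotProduct]
  refine Finset.sum_nonneg fun j _ => ?_
  simp only [kroneckerMap_one_mulVec_apply]
  exact dotProduct_graphLaplacian_mulVec_self_nonneg hA hbal _

theorem exists_kroneckerMap_graphLaplacian_mulVec_eq (hA : ∀ i j, 0 ≤ A i j)
    (hconn : ∀ i j, i ≠ j → Relation.TransGen (fun a b => 0 < A a b) i j)
    (hbal : ∀ i, ∑ j, A i j = ∑ j, A j i) {G : ι × κ → ℝ}
    (hG : ∀ x : κ → ℝ, (fun p => x p.2) ⬝ᵥ G = 0) :
    ∃ Z, kroneckerMap (· * ·) (graphLaplacian A) (1 : Matrix κ κ ℝ) *ᵥ Z = G := by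
  have hcol : ∀ j, ∑ i, G (i, j) = 0 := fun j => by
    simpa [comp_snd_dotProduct, single_dotProduct] using hG (Pi.single j 1)
  choose z hz using fun j => exists_graphLaplacian_mulVec_eq hA hconn hbal (hcol j)
  refine ⟨fun p => z p.2 p.1, funext fun ⟨i, j⟩ => ?_⟩
  rw [kroneckerMap_one_mulVec_apply]
  exact congrFun (hz j) i

end LaplacianBlocks

open Matrix in
theorem minimizer_gives_saddle_point_general
    {n d : ℕ} (A : Matrix (Fin n) (Fin n) ℝ)
    (hA : ∀ i j, 0 ≤ A i j)
    (hconn : ∀ i j : Fin n, i ≠ j → Relation.TransGen (fun a b => 0 < A a b) i j)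
    (hbal : ∀ i, ∑ j, A i j = ∑ j, A j i)
    (L : Matrix (Fin n) (Fin n) ℝ)
    (hL : L = Matrix.diagonal (fun i => ∑ j, A i j) - A)
    (BL : Matrix (Fin n × Fin d) (Fin n × Fin d) ℝ)
    (hBL : BL = Matrix.kroneckerMap (· * ·) L (1 : Matrix (Fin d) (Fin d) ℝ))
    (f : Fin n → (Fin d → ℝ) → ℝ)
    (hconv : ∀ i, ConvexOn ℝ Set.univ (f i))
    (ftil : (Fin n × Fin d → ℝ) → ℝ)
    (hftil : ftil = fun X => ∑ i, f i (fun j => X (i, j)))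
    (F : (Fin n × Fin d → ℝ) → (Fin n × Fin d → ℝ) → ℝ)
    (hF : F = fun X Z => ftil X + X ⬝ᵥ (BL *ᵥ Z) + (1 / 2) * (X ⬝ᵥ (BL *ᵥ X)))
    (xs : Fin d → ℝ) (hmin : ∀ y : Fin d → ℝ, ∑ i, f i xs ≤ ∑ i, f i y)
    (Xs : Fin n × Fin d → ℝ) (hXs : Xs = fun p => xs p.2) :
    ∃ Zs : Fin n × Fin d → ℝ,
      (-(BL *ᵥ Zs)) ∈ subdiff ftil Xs ∧
      ∀ X Z, F Xs Z ≤ F Xs Zs ∧ F Xs Zs ≤ F X Zs := by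
  obtain ⟨G, hGsub, hGorth⟩ := exists_mem_subdiff_orthogonal_consensus hconv hmin
  obtain ⟨Zs, hZs⟩ := exists_kroneckerMap_graphLaplacian_mulVec_eq (κ := Fin d) hA hconn hbal
    (G := -G) fun x => by rw [dotProduct_neg, hGorth, neg_zero]
  rw [← hftil] at hGsub
  obtain rfl : L = graphLaplacian A := hL
  subst hBL hF hXs
  have hcons := comp_snd_dotProduct_kroneckerMap_graphLaplacian_mulVec hbal xs
  have hGXs : G ⬝ᵥ (fun p => xs p.2) = 0 := by rw [dotProduct_comm, hGorth]
  refine ⟨Zs, by rwa [hZs, neg_neg], fun X Z => ⟨by simp only [hcons, le_refl], ?_⟩⟩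
  have hquad := dotProduct_kroneckerMap_graphLaplacian_mulVec_self_nonneg hA hbal X
  have hX := hGsub X
  rw [dotProduct_sub, hGXs, sub_zero] at hX
  simp only [hcons, hZs, dotProduct_neg, dotProduct_comm _ G, hGXs]
  linarith

open Matrix in
/-- If `𝐱* = 1_n ⊗ x*` where `x*` minimizes `f = ∑ i, f^i`, then there exists
`𝐳*` with `𝐋𝐳* ∈ −∂f̃(𝐱*)` such that `(𝐱*, 𝐳*)` is a saddle point of
`F(𝐱,𝐳) = f̃(𝐱) + 𝐱ᵀ𝐋𝐳 + ½𝐱ᵀ𝐋𝐱`. -/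
theorem minimizer_gives_saddle_point
    {n d : ℕ} (A : Matrix (Fin n) (Fin n) ℝ)
    (hA : ∀ i j, 0 ≤ A i j)
    (hconn : ∀ i j : Fin n, i ≠ j → Relation.TransGen (fun a b => 0 < A a b) i j)
    (hbal : ∀ i, ∑ j, A i j = ∑ j, A j i)
    (L : Matrix (Fin n) (Fin n) ℝ)
    (hL : L = Matrix.diagonal (fun i => ∑ j, A i j) - A)
    (BL : Matrix (Fin n × Fin d) (Fin n × Fin d) ℝ)
    (hBL : BL = Matrix.kroneckerMap (· * ·) L (1 : Matrix (Fin d) (Fin d) ℝ))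
    (f : Fin n → (Fin d → ℝ) → ℝ)
    (hconv : ∀ i, ConvexOn ℝ Set.univ (f i))
    (hlip : ∀ i, LocallyLipschitz (f i))
    (ftil : (Fin n × Fin d → ℝ) → ℝ)
    (hftil : ftil = fun X => ∑ i, f i (fun j => X (i, j)))
    (F : (Fin n × Fin d → ℝ) → (Fin n × Fin d → ℝ) → ℝ)
    (hF : F = fun X Z => ftil X + X ⬝ᵥ (BL *ᵥ Z) + (1 / 2) * (X ⬝ᵥ (BL *ᵥ X)))
    (xs : Fin d → ℝ) (hmin : ∀ y : Fin d → ℝ, ∑ i, f i xs ≤ ∑ i, f i y)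
    (Xs : Fin n × Fin d → ℝ) (hXs : Xs = fun p => xs p.2) :
    ∃ Zs : Fin n × Fin d → ℝ,
      (-(BL *ᵥ Zs)) ∈ subdiff ftil Xs ∧
      ∀ X Z, F Xs Z ≤ F Xs Zs ∧ F Xs Zs ≤ F X Zs :=
  minimizer_gives_saddle_point_general A hA hconn hbal L hL BL hBL f hconv ftil hftil F hF xs hmin
    Xs hXs
end

section
/- A differentiable convex function f : ℝ^d → ℝ has a globally Lipschitz gradient with constant K > 0 if and only if f is (1/K)-cocoercive, i.e., (x − x')ᵀ(∇f(x) − ∇f(x')) ≥ (1/K)‖∇f(x) − ∇f(x')‖² for all x, x' ∈ ℝ^d. -/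
/-!
Cocoercivity gives Lipschitz continuity through Cauchy–Schwarz. Conversely, the descent lemma
`f z ≤ f y + ⟪∇f y, z - y⟫ + K / 2 * ‖z - y‖ ^ 2`, taken at the gradient step
`z = y - K⁻¹ • (∇f y - ∇f x)` and combined with the first-order convexity bound
`f x + ⟪∇f x, z - x⟫ ≤ f z`, sharpens that bound to
`f x + ⟪∇f x, y - x⟫ + ‖∇f y - ∇f x‖ ^ 2 / (2 * K) ≤ f y`.
Adding this to the same inequality with `x` and `y` exchanged gives cocoercivity.
-/

open RealInnerProductSpace AffineMap
open scoped NNReal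

variable {E : Type*} [NormedAddCommGroup E] [InnerProductSpace ℝ E]

def Cocoercive (δ : ℝ) (F : E → E) : Prop :=
  ∀ x x', δ * ‖F x - F x'‖ ^ 2 ≤ ⟪x - x', F x - F x'⟫

theorem Cocoercive.lipschitzWith {δ : ℝ} {F : E → E} (h : Cocoercive δ F) (hδ : 0 < δ) :
    LipschitzWith (Real.toNNReal (1 / δ)) F := by
  refine LipschitzWith.of_dist_le' fun x x' ↦ ?_
  rw [dist_eq_norm, dist_eq_norm, div_mul_eq_mul_div, one_mul, le_div_iff₀' hδ]
  rcases (norm_nonneg (F x - F x')).eq_or_lt with hzero | hpos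
  · rw [← hzero, mul_zero]
    exact norm_nonneg _
  · refine le_of_mul_le_mul_right ?_ hpos
    calc δ * ‖F x - F x'‖ * ‖F x - F x'‖ = δ * ‖F x - F x'‖ ^ 2 := by ring
      _ ≤ ⟪x - x', F x - F x'⟫ := h x x'
      _ ≤ ‖x - x'‖ * ‖F x - F x'‖ := real_inner_le_norm _ _

variable [CompleteSpace E] {f : E → ℝ} {f' : E → E} {g x y : E} {t : ℝ}

theorem HasGradientAt.hasDerivAt_comp_lineMap (h : HasGradientAt f g (lineMap x y t)) :
    HasDerivAt (f ∘ lineMap x y) ⟪g, y - x⟫ t := by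
  simpa using h.hasFDerivAt.comp_hasDerivAt t hasDerivAt_lineMap

theorem ConvexOn.add_inner_le {s : Set E} (hf : ConvexOn ℝ s f) (hx : x ∈ s) (hy : y ∈ s)
    (hg : HasGradientAt f g x) : f x + ⟪g, y - x⟫ ≤ f y := by
  have hline : ConvexOn ℝ (Set.Icc 0 1) (f ∘ lineMap (k := ℝ) x y) :=
    (hf.comp_affineMap _).subset (fun _ ht ↦ hf.1.lineMap_mem hx hy ht) (convex_Icc 0 1)
  have hderiv : HasDerivAt (f ∘ lineMap x y) ⟪g, y - x⟫ (0 : ℝ) :=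
    HasGradientAt.hasDerivAt_comp_lineMap (by rwa [lineMap_apply_zero])
  have := hline.le_slope_of_hasDerivAt (by simp) (by simp) zero_lt_one hderiv
  simp only [slope_def_field, Function.comp_apply, lineMap_apply_one, lineMap_apply_zero,
    sub_zero, div_one] at this
  linarith

theorem le_add_inner_add_sq_of_lipschitzWith_gradient (hf : ∀ x, HasGradientAt f (f' x) x)
    {K : ℝ≥0} (hL : LipschitzWith K f') (x y : E) :
    f y ≤ f x + ⟪f' x, y - x⟫ + K / 2 * ‖y - x‖ ^ 2 := by
  set φ : ℝ → ℝ := fun t ↦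
    f (lineMap x y t) - t * ⟪f' x, y - x⟫ - K / 2 * ‖y - x‖ ^ 2 * t ^ 2
  have hderiv (t : ℝ) : HasDerivAt φ
      (⟪f' (lineMap x y t) - f' x, y - x⟫ - K * ‖y - x‖ ^ 2 * t) t :=
    ((((hf _).hasDerivAt_comp_lineMap (x := x) (y := y) (t := t)).sub
      ((hasDerivAt_id t).mul_const ⟪f' x, y - x⟫)).sub
      ((hasDerivAt_pow 2 t).const_mul (K / 2 * ‖y - x‖ ^ 2))).congr_deriv
      (by rw [inner_sub_left]; ring)
  have hslope {t : ℝ} (ht : 0 < t) :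
      ⟪f' (lineMap x y t) - f' x, y - x⟫ ≤ K * ‖y - x‖ ^ 2 * t :=
    calc ⟪f' (lineMap x y t) - f' x, y - x⟫
        ≤ ‖f' (lineMap x y t) - f' x‖ * ‖y - x‖ := real_inner_le_norm _ _
      _ ≤ K * ‖lineMap x y t - x‖ * ‖y - x‖ := by
        gcongr; exact hL.norm_sub_le _ _
      _ = K * ‖y - x‖ ^ 2 * t := by
        rw [← vsub_eq_sub (lineMap x y t), lineMap_vsub_left, vsub_eq_sub, norm_smul,
          Real.norm_of_nonneg ht.le]
        ring
  have hanti : AntitoneOn φ (Set.Ici 0) :=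
    antitoneOn_of_hasDerivWithinAt_nonpos (convex_Ici 0)
      (fun t _ ↦ (hderiv t).continuousAt.continuousWithinAt)
      (fun t _ ↦ (hderiv t).hasDerivWithinAt)
      (fun t ht ↦ by rw [interior_Ici] at ht; linarith [hslope ht])
  have := hanti Set.self_mem_Ici (Set.mem_Ici.2 zero_le_one) zero_le_one
  simp only [φ, lineMap_apply_zero, lineMap_apply_one] at this
  linarith

theorem ConvexOn.add_inner_add_sq_le_of_lipschitzWith_gradient (hconv : ConvexOn ℝ Set.univ f)
    (hf : ∀ x, HasGradientAt f (f' x) x) {K : ℝ≥0} (hK : 0 < K) (hL : LipschitzWith K f')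
    (x y : E) : f x + ⟪f' x, y - x⟫ + 1 / (2 * K) * ‖f' y - f' x‖ ^ 2 ≤ f y := by
  set dg := f' y - f' x
  set z := y - (1 / (K : ℝ)) • dg
  have hstep : z - y = -((1 / (K : ℝ)) • dg) := by simp only [z, sub_sub_cancel_left]
  have hbelow := hconv.add_inner_le (Set.mem_univ x) (Set.mem_univ z) (hf x)
  have habove := le_add_inner_add_sq_of_lipschitzWith_gradient hf hL y z
  rw [show z - x = (y - x) + (z - y) by abel, hstep, inner_add_right, inner_neg_right,
    real_inner_smul_right] at hbelow
  rw [hstep, inner_neg_right, real_inner_smul_right, norm_neg, norm_smul,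
    Real.norm_of_nonneg (by positivity)] at habove
  have hdg : ⟪f' y, dg⟫ - ⟪f' x, dg⟫ = ‖dg‖ ^ 2 := by
    rw [← inner_sub_left, real_inner_self_eq_norm_sq]
  have hK' : (K : ℝ) ≠ 0 := by positivity
  field_simp at hbelow habove ⊢
  linarith

theorem ConvexOn.cocoercive_of_lipschitzWith_gradient (hconv : ConvexOn ℝ Set.univ f)
    (hf : ∀ x, HasGradientAt f (f' x) x) {K : ℝ≥0} (hK : 0 < K) (hL : LipschitzWith K f') :
    Cocoercive (1 / K) f' := by
  intro x x'
  have h₁ := hconv.add_inner_add_sq_le_of_lipschitzWith_gradient hf hK hL x x'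
  have h₂ := hconv.add_inner_add_sq_le_of_lipschitzWith_gradient hf hK hL x' x
  rw [norm_sub_rev] at h₁
  have hinner : ⟪x - x', f' x - f' x'⟫ = -⟪f' x, x' - x⟫ - ⟪f' x', x - x'⟫ := by
    rw [inner_sub_right, real_inner_comm, real_inner_comm (f' x'), ← inner_neg_right, neg_sub]
  rw [hinner]
  linear_combination h₁ + h₂

/-- A differentiable convex function `f : ℝ^d → ℝ` has a globally Lipschitz
gradient with constant `K > 0` iff `f` is `(1/K)`-cocoercive. -/
theorem lipschitz_gradient_iff_cocoercive
    {d : ℕ} (f : EuclideanSpace ℝ (Fin d) → ℝ)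
    (f' : EuclideanSpace ℝ (Fin d) → EuclideanSpace ℝ (Fin d))
    (hdiff : ∀ x, HasGradientAt f (f' x) x)
    (hconv : ConvexOn ℝ Set.univ f)
    (K : ℝ) (hK : 0 < K) :
    LipschitzWith (Real.toNNReal K) f' ↔
      ∀ x x', (1 / K) * ‖f' x - f' x'‖ ^ 2 ≤ ⟪x - x', f' x - f' x'⟫ := by
  refine ⟨fun hL ↦ ?_, fun hco ↦ ?_⟩
  · simpa [Cocoercive, Real.coe_toNNReal K hK.le] using
      hconv.cocoercive_of_lipschitzWith_gradient hdiff (Real.toNNReal_pos.2 hK) hL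
  · simpa using Cocoercive.lipschitzWith hco (one_div_pos.2 hK)
end

section
/- There exists a strongly connected, weight-balanced digraph on 5 vertices whose Laplacian has a nonzero eigenvalue λ with √3 |Im(λ)| > Re(λ). In particular, for a weight-balanced strongly connected digraph the eigenvalues of the Laplacian need not lie in the sector {z : √3 |Im(z)| ≤ Re(z)} ∪ {0}. -/
open Matrix BigOperators

/-- `μ` is an eigenvalue of the square complex matrix `M`. -/
def IsEigOf {m : Type*} [Fintype m] (M : Matrix m m ℂ) (μ : ℂ) : Prop :=
  ∃ v : m → ℂ, v ≠ 0 ∧ M *ᵥ v = μ • v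

/-! The directed `n`-cycle is strongly connected and weight-balanced, and its Laplacian is
`1 - P` for the cyclic shift `P`, so every `n`-th root of unity `ω` gives the eigenvalue `1 - ω`
with eigenvector `j ↦ ω ^ j`. Since `1 - exp (θ i) = 2 sin (θ / 2) · exp ((θ - π) i / 2)`, its
argument has absolute value `π / 2 - θ / 2`, which exceeds the half-opening `π / 6` of the sector
as soon as `θ < 2π / 3`; for `n = 5` take `θ = 2π / 5`. -/

open Real

namespace Real

theorem one_sub_cos_lt_sqrt_three_mul_sin {θ : ℝ} (h0 : 0 < θ) (h1 : θ < 2 * π / 3) :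
    1 - cos θ < √3 * sin θ := by
  set φ := θ / 2
  have hθ : θ = 2 * φ := by ring
  have hsin : 0 < sin φ := sin_pos_of_pos_of_lt_pi (by positivity) (by linarith [pi_pos])
  have hsin' : 0 < sin (π / 3 - φ) := sin_pos_of_pos_of_lt_pi (by linarith) (by linarith)
  have key : √3 * sin θ - (1 - cos θ) = 4 * sin φ * sin (π / 3 - φ) := by
    rw [hθ, sin_two_mul, cos_two_mul, cos_sq', sin_sub, sin_pi_div_three, cos_pi_div_three]
    ring
  nlinarith [mul_pos hsin hsin']

end Real

namespace Complex

theorem one_sub_exp_ofReal_mul_I_ne_zero {θ : ℝ} (h0 : 0 < θ) (h1 : θ < π) :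
    1 - exp (θ * I) ≠ 0 := fun h => by
  have him := congrArg im h
  simp only [sub_im, one_im, exp_ofReal_mul_I_im, zero_im, zero_sub, neg_eq_zero] at him
  exact (sin_pos_of_pos_of_lt_pi h0 h1).ne' him

theorem re_one_sub_exp_ofReal_mul_I_lt {θ : ℝ} (h0 : 0 < θ) (h1 : θ < 2 * π / 3) :
    (1 - exp (θ * I)).re < √3 * |(1 - exp (θ * I)).im| := by
  have hsin := sin_pos_of_pos_of_lt_pi h0 (by linarith [pi_pos])
  simpa [exp_ofReal_mul_I_re, exp_ofReal_mul_I_im, abs_of_pos hsin]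
    using one_sub_cos_lt_sqrt_three_mul_sin h0 h1

end Complex

theorem pow_val_add_one {M : Type*} [Monoid M] {n : ℕ} [NeZero n] {ω : M} (hω : ω ^ n = 1)
    (i : Fin n) : ω ^ (i + 1 : Fin n).val = ω * ω ^ i.val := by
  rw [Fin.val_add, Fin.val_one', ← pow_eq_pow_mod _ hω, pow_add, ← pow_eq_pow_mod _ hω, pow_one,
    (Commute.self_pow ω i.val).eq]

def directedCycle (n : ℕ) [NeZero n] : Matrix (Fin n) (Fin n) ℝ :=
  fun i j => if j = i + 1 then 1 else 0

namespace directedCycle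

variable {n : ℕ} [NeZero n]

theorem nonneg (i j : Fin n) : 0 ≤ directedCycle n i j := by
  unfold directedCycle; split_ifs <;> norm_num

theorem pos_iff (i j : Fin n) : 0 < directedCycle n i j ↔ j = i + 1 := by
  unfold directedCycle; split_ifs <;> simp [*]

theorem sum_row (i : Fin n) : ∑ j, directedCycle n i j = 1 := by
  simp [directedCycle]

theorem sum_col (j : Fin n) : ∑ i, directedCycle n i j = 1 := by
  simp [directedCycle, ← sub_eq_iff_eq_add, eq_comm]

open Fin.NatCast in
theorem reflTransGen_add_natCast (i : Fin n) (k : ℕ) :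
    Relation.ReflTransGen (fun a b => b = a + 1) i (i + k) := by
  induction k with
  | zero => simpa using Relation.ReflTransGen.refl
  | succ k ih => exact ih.tail (by rw [Nat.cast_succ, add_assoc])

open Fin.NatCast in
theorem transGen (i j : Fin n) (hij : i ≠ j) :
    Relation.TransGen (fun a b => 0 < directedCycle n a b) i j := by
  simp only [pos_iff]
  have h := reflTransGen_add_natCast i (j - i).val
  rw [Fin.cast_val_eq_self, add_sub_cancel, Relation.reflTransGen_iff_eq_or_transGen] at h
  exact h.resolve_left (Ne.symm hij)

theorem laplacian_eq : diagonal (fun i => ∑ j, directedCycle n i j) - directedCycle n =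
    1 - directedCycle n := by
  simp [sum_row]

theorem mulVec_pow_val {ω : ℂ} (hω : ω ^ n = 1) :
    (directedCycle n).map Complex.ofReal *ᵥ (fun j : Fin n => ω ^ j.val) =
      ω • fun j : Fin n => ω ^ j.val := by
  ext i
  simp [mulVec, dotProduct, directedCycle, apply_ite Complex.ofReal, pow_val_add_one hω]

theorem isEigOf_laplacian {ω : ℂ} (hω : ω ^ n = 1) :
    IsEigOf ((diagonal (fun i => ∑ j, directedCycle n i j) - directedCycle n).map Complex.ofReal)
      (1 - ω) := by
  refine ⟨fun j => ω ^ j.val, fun h => by simpa using congrFun h 0, ?_⟩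
  rw [laplacian_eq, Matrix.map_sub _ Complex.ofReal_sub,
    Matrix.map_one _ Complex.ofReal_zero Complex.ofReal_one, sub_mulVec, one_mulVec,
    mulVec_pow_val hω, sub_smul, one_smul]

end directedCycle

/-- There exists a strongly connected, weight-balanced digraph on 5
vertices whose Laplacian has a nonzero eigenvalue `λ` with `√3 |Im λ| > Re λ`; so the
Laplacian eigenvalues of weight-balanced strongly connected digraphs need not lie in the
sector `{z : √3 |Im z| ≤ Re z} ∪ {0}`. -/
theorem exists_weight_balanced_digraph_outside_sector :
    ∃ A : Matrix (Fin 5) (Fin 5) ℝ,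
      (∀ i j, 0 ≤ A i j) ∧
      (∀ i j : Fin 5, i ≠ j → Relation.TransGen (fun a b => 0 < A a b) i j) ∧
      (∀ i, ∑ j, A i j = ∑ j, A j i) ∧
      ∃ lam : ℂ,
        IsEigOf ((Matrix.diagonal (fun i => ∑ j, A i j) - A).map (Complex.ofReal)) lam ∧
        lam ≠ 0 ∧ Real.sqrt 3 * |lam.im| > lam.re := by
  have h0 : 0 < 2 * π / 5 := by positivity
  have h1 : 2 * π / 5 < 2 * π / 3 := by linarith [pi_pos]
  have hω : Complex.exp ((2 * π / 5 : ℝ) * Complex.I) ^ 5 = 1 := by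
    rw [← Complex.exp_nat_mul, ← Complex.exp_two_pi_mul_I]
    push_cast
    ring_nf
  refine ⟨directedCycle 5, directedCycle.nonneg, directedCycle.transGen,
    fun i => by rw [directedCycle.sum_row, directedCycle.sum_col],
    1 - Complex.exp ((2 * π / 5 : ℝ) * Complex.I), directedCycle.isEigOf_laplacian hω,
    Complex.one_sub_exp_ofReal_mul_I_ne_zero h0 (by linarith),
    Complex.re_one_sub_exp_ofReal_mul_I_lt h0 h1⟩
end

section
/- Let G be a strongly connected, weight-balanced digraph and suppose all objective functions f^i are identically zero. If α ≥ 2√2, then the agreement set S = {(1_n ⊗ x, 1_n ⊗ z)} is asymptotically stable under the linear dynamics ẋ = −α𝐋x − 𝐋z, ż = 𝐋x, i.e., every solution converges to S. -/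
/-!
Since `L` has zero row sums and, by weight balance, zero column sums, the flow preserves the
column averages of `x` and `z` and acts on each of the `d` coordinates separately, so it suffices
to show that, in one coordinate, the disagreement vectors `x - avg x • 1` and `z - avg z • 1`
tend to `0`. Let `β > 0` be a root of `β² - αβ + 2 = 0` (real because `α ≥ 2√2`), and let `u`, `v`
be the disagreement vectors of `x` and `βx + z`. Then `u' = L((β - α)u - v)`, `v' = -L(u + βv)`,
and `V = |u|² + |v|²` satisfies
`V' = -(1/β)⟨u, Lu⟩ - (2β/3)⟨v, Lv⟩ - (1/(3β))⟨w, Lw⟩` with `w = 3u + 2βv`.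
By weight balance `⟨m, Lm⟩ = ½ ∑ aᵢⱼ (mᵢ - mⱼ)² ≥ 0`, and by strong connectivity it vanishes only
on consensus vectors, so by compactness it dominates `λ|m|²` on vectors with zero sum.
Hence `V' ≤ -εV` and `V → 0`.
-/

open Matrix BigOperators Filter Topology

theorem exists_pos_mul_sq_norm_le {E : Type*} [NormedAddCommGroup E] [NormedSpace ℝ E]
    [ProperSpace E] {K : Set E} (hK : IsClosed K) (hK_smul : ∀ c : ℝ, ∀ m ∈ K, c • m ∈ K)
    {Q : E → ℝ} (hQ : Continuous Q) (hQ_smul : ∀ (c : ℝ) m, Q (c • m) = c ^ 2 * Q m)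
    (hQ_pos : ∀ m ∈ K, m ≠ 0 → 0 < Q m) :
    ∃ lam > 0, ∀ m ∈ K, lam * ‖m‖ ^ 2 ≤ Q m := by
  have hQ_zero : Q 0 = 0 := by simpa using hQ_smul 0 0
  have hnormalize : ∀ m ∈ K, m ≠ 0 → ‖m‖⁻¹ • m ∈ K ∩ Metric.sphere 0 1 := fun m hm hm0 =>
    ⟨hK_smul _ m hm, by simp [norm_smul, hm0]⟩
  by_cases hT : (K ∩ Metric.sphere (0 : E) 1).Nonempty
  · obtain ⟨m₀, hm₀, hmin⟩ := ((isCompact_sphere 0 1).inter_left hK).exists_isMinOn hT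
      hQ.continuousOn
    refine ⟨Q m₀, hQ_pos m₀ hm₀.1 (ne_zero_of_mem_unit_sphere ⟨m₀, hm₀.2⟩), fun m hm => ?_⟩
    obtain rfl | hm0 := eq_or_ne m 0
    · simp [hQ_zero]
    have hle : Q m₀ ≤ ‖m‖⁻¹ ^ 2 * Q m := hQ_smul _ m ▸ hmin (hnormalize m hm hm0)
    have hpos : 0 < ‖m‖ ^ 2 := by positivity
    rw [inv_pow, ← div_eq_inv_mul, le_div_iff₀ hpos] at hle
    linarith
  · refine ⟨1, one_pos, fun m hm => ?_⟩
    obtain rfl | hm0 := eq_or_ne m 0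
    · simp [hQ_zero]
    · exact absurd ⟨_, hnormalize m hm hm0⟩ hT

theorem tendsto_zero_of_hasDerivAt_le_neg_mul {f f' : ℝ → ℝ} {ε : ℝ} (hε : 0 < ε)
    (hf : ∀ t, HasDerivAt f (f' t) t) (hf' : ∀ t, f' t ≤ -ε * f t) (hf0 : ∀ t, 0 ≤ f t) :
    Tendsto f atTop (𝓝 0) := by
  have hanti : Antitone fun t => f t * Real.exp (t * ε) := by
    refine antitone_of_hasDerivAt_nonpos
      (fun t => (hf t).fun_mul (hasDerivAt_mul_const ε).exp) fun t => ?_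
    have hrw : f' t * Real.exp (t * ε) + f t * (Real.exp (t * ε) * ε)
        = (f' t + ε * f t) * Real.exp (t * ε) := by ring
    simp only [hrw, Pi.zero_apply]
    exact mul_nonpos_of_nonpos_of_nonneg (by linarith [hf' t]) (Real.exp_pos _).le
  have hbound : ∀ t ≥ 0, f t ≤ f 0 * Real.exp (-(t * ε)) := fun t ht => by
    have : f t * Real.exp (t * ε) ≤ f 0 := by simpa using hanti ht
    rwa [Real.exp_neg, ← div_eq_mul_inv, le_div_iff₀ (Real.exp_pos _)]
  have hexp : Tendsto (fun t => f 0 * Real.exp (-(t * ε))) atTop (𝓝 0) := by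
    simpa using (Real.tendsto_exp_neg_atTop_nhds_zero.comp
      (tendsto_id.atTop_mul_const hε)).const_mul (f 0)
  exact squeeze_zero' (.of_forall hf0) (eventually_ge_atTop 0 |>.mono hbound) hexp

theorem tendsto_infDist_zero_of_sub_mem {α E : Type*} [SeminormedAddCommGroup E] {l : Filter α}
    {S : Set E} {y w : α → E} (hmem : ∀ t, y t - w t ∈ S) (hw : Tendsto w l (𝓝 0)) :
    Tendsto (fun t => Metric.infDist (y t) S) l (𝓝 0) := by
  refine squeeze_zero (fun _ => Metric.infDist_nonneg) (fun t => ?_)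
    (tendsto_zero_iff_norm_tendsto_zero.1 hw)
  simpa [dist_eq_norm] using Metric.infDist_le_dist_of_mem (x := y t) (hmem t)

theorem exists_pos_mul_sub_eq_two {α : ℝ} (hα : 2 * Real.sqrt 2 ≤ α) :
    ∃ β, 0 < β ∧ β * (α - β) = 2 := by
  have h8 : 8 ≤ α ^ 2 := by
    nlinarith [Real.sq_sqrt (show (0 : ℝ) ≤ 2 by norm_num), Real.sqrt_nonneg 2]
  set s := Real.sqrt (α ^ 2 - 8)
  have hs : s ^ 2 = α ^ 2 - 8 := Real.sq_sqrt (by linarith)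
  have hsα : s < α := by nlinarith [Real.sqrt_nonneg (α ^ 2 - 8), Real.sqrt_nonneg 2]
  exact ⟨(α - s) / 2, by linarith, by linear_combination (-1 / 4) * hs⟩

theorem HasDerivAt.column {ι κ : Type*} {f : ℝ → ι × κ → ℝ} {f' : ι × κ → ℝ} {t : ℝ} (h : HasDerivAt f f' t) (k : κ) :
    HasDerivAt (fun s i => f s (i, k)) (fun i => f' (i, k)) t :=
  hasDerivAt_pi.2 fun i => hasDerivAt_pi.1 h (i, k)

section

variable {ι : Type*} [Fintype ι]

theorem dotProduct_self_le_card_mul_norm_sq (m : ι → ℝ) :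
    m ⬝ᵥ m ≤ Fintype.card ι * ‖m‖ ^ 2 := by
  calc m ⬝ᵥ m = ∑ i, ‖m i‖ ^ 2 := by simp [dotProduct, sq]
    _ ≤ ∑ _i : ι, ‖m‖ ^ 2 := Finset.sum_le_sum fun i _ => by gcongr; exact norm_le_pi_norm m i
    _ = Fintype.card ι * ‖m‖ ^ 2 := by simp

theorem HasDerivAt.dotProduct_self {u : ℝ → ι → ℝ} {u' : ι → ℝ} {t : ℝ}
    (h : HasDerivAt u u' t) : HasDerivAt (fun s => u s ⬝ᵥ u s) (2 * (u t ⬝ᵥ u')) t := by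
  refine (HasDerivAt.fun_sum fun i _ =>
    (hasDerivAt_pi.1 h i).fun_mul (hasDerivAt_pi.1 h i)).congr_deriv ?_
  simp only [dotProduct, Finset.mul_sum]
  exact Finset.sum_congr rfl fun i _ => by ring

theorem tendsto_zero_of_dotProduct_self_le {α : Type*} {l : Filter α}
    {u : α → ι → ℝ} {V : α → ℝ} (hle : ∀ t, u t ⬝ᵥ u t ≤ V t) (hV : Tendsto V l (𝓝 0)) :
    Tendsto u l (𝓝 0) := by
  refine tendsto_pi_nhds.2 fun i => squeeze_zero_norm (fun t => ?_) (by simpa using hV.sqrt)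
  rw [Real.norm_eq_abs, ← Real.sqrt_sq_eq_abs]
  refine Real.sqrt_le_sqrt ((?_ : u t i ^ 2 ≤ u t ⬝ᵥ u t).trans (hle t))
  exact sq (u t i) ▸ Finset.single_le_sum (fun j _ => mul_self_nonneg (u t j)) (Finset.mem_univ i)

theorem dotProduct_mulVec_lyapunov_identity (M : Matrix ι ι ℝ)
    {α β : ℝ} (hβ : β ≠ 0) (hαβ : β * (α - β) = 2) (u v : ι → ℝ) :
    2 * (u ⬝ᵥ M *ᵥ ((β - α) • u - v)) + 2 * (v ⬝ᵥ -(M *ᵥ (u + β • v)))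
      = -(1 / β) * (u ⬝ᵥ M *ᵥ u) - 2 * β / 3 * (v ⬝ᵥ M *ᵥ v)
        - 1 / (3 * β) * (((3 : ℝ) • u + (2 * β) • v) ⬝ᵥ M *ᵥ ((3 : ℝ) • u + (2 * β) • v)) := by
  simp only [mulVec_add, mulVec_sub, mulVec_smul, dotProduct_add, dotProduct_sub,
    dotProduct_smul, dotProduct_neg, add_dotProduct, smul_dotProduct, smul_eq_mul]
  field_simp
  linear_combination (-6 * (u ⬝ᵥ M *ᵥ u)) * hαβ

noncomputable def disagreement (m : ι → ℝ) : ι → ℝ :=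
  m - Function.const ι ((∑ i, m i) / Fintype.card ι)

theorem sum_disagreement [Nonempty ι] (m : ι → ℝ) : ∑ i, disagreement m i = 0 := by
  have : (Fintype.card ι : ℝ) ≠ 0 := Nat.cast_ne_zero.2 Fintype.card_ne_zero
  simp [disagreement, Finset.sum_sub_distrib, mul_div_cancel₀ _ this]

theorem disagreement_eq_self {m : ι → ℝ} (hm : ∑ i, m i = 0) : disagreement m = m := by
  simp [disagreement, hm]

theorem disagreement_smul_add (c : ℝ) (m m' : ι → ℝ) :
    disagreement (c • m + m') = c • disagreement m + disagreement m' := by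
  ext i
  simp [disagreement, Finset.sum_add_distrib, ← Finset.mul_sum]
  ring

theorem HasDerivAt.disagreement {f : ℝ → ι → ℝ} {f' : ι → ℝ} {t : ℝ} (h : HasDerivAt f f' t) :
    HasDerivAt (fun s => disagreement (f s)) (disagreement f') t :=
  h.sub <| hasDerivAt_pi.2 fun _ =>
    (HasDerivAt.fun_sum fun i _ => hasDerivAt_pi.1 h i).div_const _

theorem Matrix.kroneckerMap_one_mulVec_column {κ R : Type*} [Fintype κ]
    [DecidableEq κ] [CommSemiring R] (L : Matrix ι ι R) (m : ι × κ → R) (k : κ) :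
    (fun i => (kroneckerMap (· * ·) L (1 : Matrix κ κ R) *ᵥ m) (i, k))
      = L *ᵥ fun j => m (j, k) := by
  ext i
  simp [mulVec, dotProduct, Fintype.sum_prod_type, one_apply, mul_comm]

end

namespace Matrix

variable {ι : Type*} [Fintype ι] [DecidableEq ι]

def laplacian (A : Matrix ι ι ℝ) : Matrix ι ι ℝ := diagonal (fun i => ∑ j, A i j) - A

variable {A : Matrix ι ι ℝ}

theorem laplacian_mulVec_apply (m : ι → ℝ) (i : ι) :
    (laplacian A *ᵥ m) i = ∑ j, A i j * (m i - m j) := by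
  rw [laplacian, sub_mulVec, Pi.sub_apply, mulVec_diagonal, Finset.sum_mul, mulVec, dotProduct,
    ← Finset.sum_sub_distrib]
  simp only [mul_sub]

theorem laplacian_mulVec_const (c : ℝ) : laplacian A *ᵥ Function.const ι c = 0 := by
  ext i
  simp [laplacian_mulVec_apply]

theorem one_vecMul_laplacian (hbal : ∀ i, ∑ j, A i j = ∑ j, A j i) :
    1 ᵥ* laplacian A = 0 := by
  ext j
  rw [laplacian, vecMul_sub, Pi.sub_apply, vecMul_diagonal]
  simp [vecMul, dotProduct, hbal j]

theorem sum_laplacian_mulVec (hbal : ∀ i, ∑ j, A i j = ∑ j, A j i) (m : ι → ℝ) :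
    ∑ i, (laplacian A *ᵥ m) i = 0 := by
  rw [← one_dotProduct, dotProduct_mulVec, one_vecMul_laplacian hbal, zero_dotProduct]

theorem two_mul_dotProduct_laplacian_mulVec (hbal : ∀ i, ∑ j, A i j = ∑ j, A j i)
    (m : ι → ℝ) :
    2 * (m ⬝ᵥ laplacian A *ᵥ m) = ∑ i, ∑ j, A i j * (m i - m j) ^ 2 := by
  have hsym : ∑ i, ∑ j, A i j * m j ^ 2 = ∑ i, ∑ j, A i j * m i ^ 2 := by
    rw [Finset.sum_comm]
    simp_rw [← Finset.sum_mul, hbal]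
  have hexp : ∀ i j, A i j * (m i - m j) ^ 2
      = 2 * (m i * (A i j * (m i - m j))) + (A i j * m j ^ 2 - A i j * m i ^ 2) := by
    intros; ring
  simp only [dotProduct, laplacian_mulVec_apply, Finset.mul_sum, hexp, Finset.sum_add_distrib,
    Finset.sum_sub_distrib, hsym, sub_self, add_zero]

theorem dotProduct_laplacian_mulVec_nonneg (hA : ∀ i j, 0 ≤ A i j)
    (hbal : ∀ i, ∑ j, A i j = ∑ j, A j i) (m : ι → ℝ) : 0 ≤ m ⬝ᵥ laplacian A *ᵥ m := by
  have := two_mul_dotProduct_laplacian_mulVec hbal m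
  have : 0 ≤ ∑ i, ∑ j, A i j * (m i - m j) ^ 2 :=
    Finset.sum_nonneg fun i _ => Finset.sum_nonneg fun j _ => mul_nonneg (hA i j) (sq_nonneg _)
  linarith

theorem eq_of_dotProduct_laplacian_mulVec_eq_zero (hA : ∀ i j, 0 ≤ A i j)
    (hconn : ∀ i j, i ≠ j → Relation.TransGen (fun a b => 0 < A a b) i j)
    (hbal : ∀ i, ∑ j, A i j = ∑ j, A j i) {m : ι → ℝ} (hm : m ⬝ᵥ laplacian A *ᵥ m = 0)
    (i j : ι) : m i = m j := by
  have hsum : ∑ i, ∑ j, A i j * (m i - m j) ^ 2 = 0 := by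
    rw [← two_mul_dotProduct_laplacian_mulVec hbal, hm, mul_zero]
  have hedge : ∀ a b, 0 < A a b → m a = m b := by
    intro a b hab
    have hterm : A a b * (m a - m b) ^ 2 = 0 := by
      have hnonneg : ∀ i j, 0 ≤ A i j * (m i - m j) ^ 2 := fun i j =>
        mul_nonneg (hA i j) (sq_nonneg _)
      rw [Finset.sum_eq_zero_iff_of_nonneg fun i _ =>
        Finset.sum_nonneg fun j _ => hnonneg i j] at hsum
      exact (Finset.sum_eq_zero_iff_of_nonneg fun j _ => hnonneg a j).1
        (hsum a (Finset.mem_univ a)) b (Finset.mem_univ b)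
    simpa [hab.ne', sub_eq_zero] using hterm
  obtain rfl | hij := eq_or_ne i j
  · rfl
  · simpa [Relation.transGen_eq_self] using
      Relation.TransGen.lift (p := Eq) m hedge i j (hconn i j hij)

theorem exists_pos_mul_dotProduct_self_le_laplacian [Nonempty ι] (hA : ∀ i j, 0 ≤ A i j)
    (hconn : ∀ i j, i ≠ j → Relation.TransGen (fun a b => 0 < A a b) i j)
    (hbal : ∀ i, ∑ j, A i j = ∑ j, A j i) :
    ∃ lam > 0, ∀ m : ι → ℝ, ∑ i, m i = 0 → lam * (m ⬝ᵥ m) ≤ m ⬝ᵥ laplacian A *ᵥ m := by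
  have hpos : ∀ m : ι → ℝ, ∑ i, m i = 0 → m ≠ 0 → 0 < m ⬝ᵥ laplacian A *ᵥ m := by
    intro m hsum hm
    refine (dotProduct_laplacian_mulVec_nonneg hA hbal m).lt_of_ne fun hQ => hm ?_
    have hconst := eq_of_dotProduct_laplacian_mulVec_eq_zero hA hconn hbal hQ.symm
    ext i
    have : (Fintype.card ι : ℝ) * m i = 0 := by
      simpa [hconst _ i] using hsum
    simpa [Fintype.card_ne_zero] using this
  obtain ⟨lam, hlam, hle⟩ := exists_pos_mul_sq_norm_le (K := {m : ι → ℝ | ∑ i, m i = 0})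
    (isClosed_eq (by fun_prop) continuous_const)
    (fun c m hm => by simp_all [← Finset.mul_sum])
    (Q := fun m => m ⬝ᵥ laplacian A *ᵥ m) (by fun_prop)
    (fun c m => by simp only [mulVec_smul, smul_dotProduct, dotProduct_smul]; simp; ring)
    hpos
  have hcard : (0 : ℝ) < Fintype.card ι := by exact_mod_cast Fintype.card_pos
  refine ⟨lam / Fintype.card ι, by positivity, fun m hm => ?_⟩
  calc lam / Fintype.card ι * (m ⬝ᵥ m) ≤ lam / Fintype.card ι * (Fintype.card ι * ‖m‖ ^ 2) := by
        gcongr; exact dotProduct_self_le_card_mul_norm_sq m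
    _ = lam * ‖m‖ ^ 2 := by field_simp
    _ ≤ _ := hle m hm

theorem laplacian_mulVec_disagreement (m : ι → ℝ) :
    laplacian A *ᵥ disagreement m = laplacian A *ᵥ m := by
  rw [disagreement, mulVec_sub, laplacian_mulVec_const, sub_zero]

theorem disagreement_laplacian_mulVec (hbal : ∀ i, ∑ j, A i j = ∑ j, A j i) (m : ι → ℝ) :
    disagreement (laplacian A *ᵥ m) = laplacian A *ᵥ m :=
  disagreement_eq_self (sum_laplacian_mulVec hbal m)

theorem tendsto_zero_of_hasDerivAt_laplacian_mulVec [Nonempty ι] (hA : ∀ i j, 0 ≤ A i j)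
    (hconn : ∀ i j, i ≠ j → Relation.TransGen (fun a b => 0 < A a b) i j)
    (hbal : ∀ i, ∑ j, A i j = ∑ j, A j i) {α β : ℝ} (hβ : 0 < β) (hαβ : β * (α - β) = 2)
    {u v : ℝ → ι → ℝ} (hu_sum : ∀ t, ∑ i, u t i = 0) (hv_sum : ∀ t, ∑ i, v t i = 0)
    (hu : ∀ t, HasDerivAt u (laplacian A *ᵥ ((β - α) • u t - v t)) t)
    (hv : ∀ t, HasDerivAt v (-(laplacian A *ᵥ (u t + β • v t))) t) :
    Tendsto u atTop (𝓝 0) ∧ Tendsto v atTop (𝓝 0) := by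
  obtain ⟨lam, hlam, hgap⟩ := exists_pos_mul_dotProduct_self_le_laplacian hA hconn hbal
  have hQ := dotProduct_laplacian_mulVec_nonneg hA hbal
  have hsq (m : ι → ℝ) : 0 ≤ m ⬝ᵥ m := Finset.sum_nonneg fun i _ => mul_self_nonneg (m i)
  set c := min (1 / β) (2 * β / 3)
  have hc : 0 < c := lt_min (by positivity) (by positivity)
  have hV := fun t => ((hu t).dotProduct_self).add (hv t).dotProduct_self
  have hdecay : ∀ t, 2 * (u t ⬝ᵥ laplacian A *ᵥ ((β - α) • u t - v t))
      + 2 * (v t ⬝ᵥ -(laplacian A *ᵥ (u t + β • v t)))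
      ≤ -(c * lam) * (u t ⬝ᵥ u t + v t ⬝ᵥ v t) := fun t => by
    rw [dotProduct_mulVec_lyapunov_identity _ hβ.ne' hαβ]
    have hcu := mul_le_mul_of_nonneg_right (min_le_left (1 / β) (2 * β / 3)) (hQ (u t))
    have hcv := mul_le_mul_of_nonneg_right (min_le_right (1 / β) (2 * β / 3)) (hQ (v t))
    have hgu := mul_le_mul_of_nonneg_left (hgap (u t) (hu_sum t)) hc.le
    have hgv := mul_le_mul_of_nonneg_left (hgap (v t) (hv_sum t)) hc.le
    have hw := mul_nonneg (one_div_pos.2 (by positivity : 0 < 3 * β)).le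
      (hQ ((3 : ℝ) • u t + (2 * β) • v t))
    linarith
  have hV0 := tendsto_zero_of_hasDerivAt_le_neg_mul (mul_pos hc hlam) hV hdecay fun t =>
    add_nonneg (hsq (u t)) (hsq (v t))
  exact ⟨tendsto_zero_of_dotProduct_self_le (fun t => le_add_of_nonneg_right (hsq (v t))) hV0,
    tendsto_zero_of_dotProduct_self_le (fun t => le_add_of_nonneg_left (hsq (u t))) hV0⟩

theorem tendsto_disagreement_of_hasDerivAt [Nonempty ι] (hA : ∀ i j, 0 ≤ A i j)
    (hconn : ∀ i j, i ≠ j → Relation.TransGen (fun a b => 0 < A a b) i j)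
    (hbal : ∀ i, ∑ j, A i j = ∑ j, A j i) {α : ℝ} (hα : 2 * Real.sqrt 2 ≤ α)
    {x z : ℝ → ι → ℝ}
    (hx : ∀ t, HasDerivAt x (-(α • (laplacian A *ᵥ x t)) - laplacian A *ᵥ z t) t)
    (hz : ∀ t, HasDerivAt z (laplacian A *ᵥ x t) t) :
    Tendsto (fun t => disagreement (x t)) atTop (𝓝 0) ∧
      Tendsto (fun t => disagreement (z t)) atTop (𝓝 0) := by
  obtain ⟨β, hβ, hαβ⟩ := exists_pos_mul_sub_eq_two hα
  have hx' : ∀ t, -(α • (laplacian A *ᵥ x t)) - laplacian A *ᵥ z t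
      = laplacian A *ᵥ (-(α • x t) - z t) := fun t => by
    simp only [mulVec_sub, mulVec_neg, mulVec_smul]
  obtain ⟨hu, hv⟩ := tendsto_zero_of_hasDerivAt_laplacian_mulVec hA hconn hbal hβ hαβ
    (u := fun t => disagreement (x t)) (v := fun t => disagreement (β • x t + z t))
    (fun t => sum_disagreement _) (fun t => sum_disagreement _)
    (fun t => by
      refine (hx t).disagreement.congr_deriv ?_
      rw [hx', disagreement_laplacian_mulVec hbal]
      simp only [mulVec_sub, mulVec_add, mulVec_neg, mulVec_smul, laplacian_mulVec_disagreement]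
      module)
    (fun t => by
      refine (((hx t).const_smul β).add (hz t)).disagreement.congr_deriv ?_
      rw [hx', ← mulVec_smul, ← mulVec_add, disagreement_laplacian_mulVec hbal]
      simp only [mulVec_sub, mulVec_add, mulVec_neg, mulVec_smul, laplacian_mulVec_disagreement]
      linear_combination (norm := module) -(hαβ • (laplacian A *ᵥ x t)))
  refine ⟨hu, ?_⟩
  simpa [disagreement_smul_add] using hv.sub (hu.const_smul β)

end Matrix

/-- For a strongly connected, weight-balanced digraph with all objective
functions zero, if `α ≥ 2√2` then the agreement set
`S = {(1_n ⊗ x, 1_n ⊗ z)}` is asymptotically stable under `ẋ = −α𝐋x − 𝐋z, ż = 𝐋x`: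
every solution converges to `S`. -/
theorem agreement_set_asymptotically_stable
    {n d : ℕ}
    (A : Matrix (Fin n) (Fin n) ℝ)
    (hA : ∀ i j, 0 ≤ A i j)
    (hconn : ∀ i j : Fin n, i ≠ j → Relation.TransGen (fun a b => 0 < A a b) i j)
    (hbal : ∀ i, ∑ j, A i j = ∑ j, A j i)
    (L : Matrix (Fin n) (Fin n) ℝ)
    (hL : L = Matrix.diagonal (fun i => ∑ j, A i j) - A)
    (BL : Matrix (Fin n × Fin d) (Fin n × Fin d) ℝ)
    (hBL : BL = Matrix.kroneckerMap (· * ·) L (1 : Matrix (Fin d) (Fin d) ℝ))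
    (α : ℝ) (hα : 2 * Real.sqrt 2 ≤ α)
    (x z : ℝ → (Fin n × Fin d → ℝ))
    (hx : ∀ t, HasDerivAt x (-(α • (BL *ᵥ x t)) - BL *ᵥ z t) t)
    (hz : ∀ t, HasDerivAt z (BL *ᵥ x t) t) :
    Tendsto (fun t => Metric.infDist (x t, z t)
        {p : (Fin n × Fin d → ℝ) × (Fin n × Fin d → ℝ) |
          ∃ a b : Fin d → ℝ, p.1 = (fun q => a q.2) ∧ p.2 = (fun q => b q.2)})
      atTop (nhds 0) := by
  change L = laplacian A at hL
  subst hL hBL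
  have hcol (q : Fin n × Fin d) :
      Tendsto (fun t => disagreement (fun i => x t (i, q.2)) q.1) atTop (𝓝 0) ∧
        Tendsto (fun t => disagreement (fun i => z t (i, q.2)) q.1) atTop (𝓝 0) := by
    have : Nonempty (Fin n) := ⟨q.1⟩
    obtain ⟨hxk, hzk⟩ := tendsto_disagreement_of_hasDerivAt hA hconn hbal hα
      (x := fun t i => x t (i, q.2)) (z := fun t i => z t (i, q.2))
      (fun t => ((hx t).column q.2).congr_deriv <| by
        rw [← kroneckerMap_one_mulVec_column, ← kroneckerMap_one_mulVec_column]; rfl)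
      (fun t => ((hz t).column q.2).congr_deriv <| kroneckerMap_one_mulVec_column ..)
    exact ⟨tendsto_pi_nhds.1 hxk q.1, tendsto_pi_nhds.1 hzk q.1⟩
  refine tendsto_infDist_zero_of_sub_mem (fun t => ?_)
    ((tendsto_pi_nhds.2 fun q => (hcol q).1).prodMk_nhds (tendsto_pi_nhds.2 fun q => (hcol q).2))
  exact ⟨fun k => (∑ i, x t (i, k)) / n, fun k => (∑ i, z t (i, k)) / n,
    funext fun q => by simp [disagreement], funext fun q => by simp [disagreement]⟩
end

section
/- Define h : ℝ_{>0} → ℝ by h(r) = ½ Λ*(L + Lᵀ)·(−(r⁴ + 3r² + 2)/r + √(((r⁴ + 3r² + 2)/r)² − 4)) + K r²/(1 + r²), where Λ*(L + Lᵀ) > 0 is the smallest nonzero eigenvalue of L + Lᵀ and K > 0. Then there exists β* > 0 with h(β*) = 0, h(r) < 0 for all sufficiently small r > 0, and lim_{r→∞} h(r) = K > 0. -/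
/-!
Write `x = (r⁴ + 3r² + 2)/r ≥ 2`. Since `-x + √(x² - 4) = -4 / (x + √(x² - 4))`, the first
summand of `h` lies between `-2Λ/x` and `-Λ/x`. For `0 < r ≤ 1` we have `x ≤ 6/r`, so
`h r ≤ -Λr/6 + Kr² < 0` once `r < Λ/(6K)`. As `r → ∞`, `x → ∞` kills the first summand and
`Kr²/(1 + r²) → K`. The intermediate value theorem on `(0, ∞)` then gives a root.
-/

open Matrix BigOperators Filter Set Topology

theorem neg_div_le_neg_add_sqrt_sq_sub {x c : ℝ} (hx : 0 < x) (hc : 0 ≤ c) (hcx : c ≤ x ^ 2) :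
    -(c / x) ≤ -x + √(x ^ 2 - c) := by
  have hs : √(x ^ 2 - c) ^ 2 = x ^ 2 - c := Real.sq_sqrt (by linarith)
  have hsx : √(x ^ 2 - c) ≤ x := by nlinarith [Real.sqrt_nonneg (x ^ 2 - c)]
  rw [neg_le, neg_add, neg_neg, le_div_iff₀ hx]
  nlinarith [Real.sqrt_nonneg (x ^ 2 - c)]

theorem neg_add_sqrt_sq_sub_le_neg_div {x c : ℝ} (hx : 0 < x) (hcx : c ≤ x ^ 2) :
    -x + √(x ^ 2 - c) ≤ -(c / (2 * x)) := by
  have hs : √(x ^ 2 - c) ^ 2 = x ^ 2 - c := Real.sq_sqrt (by linarith)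
  rw [le_neg, neg_add, neg_neg, div_le_iff₀ (by positivity)]
  nlinarith [sq_nonneg (x - √(x ^ 2 - c))]

theorem tendsto_neg_add_sqrt_sq_sub_atTop {c : ℝ} (hc : 0 ≤ c) :
    Tendsto (fun x => -x + √(x ^ 2 - c)) atTop (𝓝 0) := by
  have hlower : Tendsto (fun x : ℝ => -(c / x)) atTop (𝓝 0) := by
    simpa using ((tendsto_const_nhds (x := c)).div_atTop tendsto_id).neg
  have hlarge : ∀ᶠ x : ℝ in atTop, 0 < x ∧ c ≤ x ^ 2 :=
    (eventually_gt_atTop 0).and ((tendsto_pow_atTop two_ne_zero).eventually_ge_atTop c)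
  refine tendsto_of_tendsto_of_tendsto_of_le_of_le' hlower tendsto_const_nhds ?_ ?_
  · filter_upwards [hlarge] with x ⟨hx, hcx⟩
    exact neg_div_le_neg_add_sqrt_sq_sub hx hc hcx
  · filter_upwards [hlarge] with x ⟨hx, hcx⟩
    have : 0 ≤ c / (2 * x) := by positivity
    linarith [neg_add_sqrt_sq_sub_le_neg_div hx hcx]

theorem tendsto_mul_sq_div_one_add_sq_atTop (K : ℝ) :
    Tendsto (fun r : ℝ => K * r ^ 2 / (1 + r ^ 2)) atTop (𝓝 K) := by
  have h : ∀ r : ℝ, K * r ^ 2 / (1 + r ^ 2) = K - K / (1 + r ^ 2) := fun r => by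
    field_simp; ring
  simp_rw [h]
  simpa using tendsto_const_nhds.sub <| tendsto_const_nhds.div_atTop <|
    tendsto_atTop_add_const_left _ 1 (tendsto_pow_atTop (α := ℝ) two_ne_zero)

theorem exists_pos_root_of_continuousOn_Ioi {g : ℝ → ℝ} (hg : ContinuousOn g (Ioi 0))
    {a : ℝ} (ha : 0 < a) (hga : g a < 0) (hpos : ∀ᶠ r in atTop, 0 < g r) :
    ∃ β, 0 < β ∧ g β = 0 := by
  obtain ⟨b, hgb, hb⟩ := (hpos.and (eventually_gt_atTop 0)).exists
  obtain ⟨β, hβ, hgβ⟩ :=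
    isPreconnected_Ioi.intermediate_value (mem_Ioi.2 ha) (mem_Ioi.2 hb) hg ⟨hga.le, hgb.le⟩
  exact ⟨β, hβ, hgβ⟩

noncomputable section

def quarticQuot (r : ℝ) : ℝ := (r ^ 4 + 3 * r ^ 2 + 2) / r

def hFun (Λ K r : ℝ) : ℝ :=
  1 / 2 * Λ * (-quarticQuot r + √(quarticQuot r ^ 2 - 4)) + K * r ^ 2 / (1 + r ^ 2)

end

theorem two_le_quarticQuot {r : ℝ} (hr : 0 < r) : 2 ≤ quarticQuot r := by
  rw [quarticQuot, le_div_iff₀ hr]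
  nlinarith [sq_nonneg (r - 1), sq_nonneg (r ^ 2)]

theorem self_le_quarticQuot {r : ℝ} (hr : 0 < r) : r ≤ quarticQuot r := by
  rw [quarticQuot, le_div_iff₀ hr]
  nlinarith [sq_nonneg (r ^ 2)]

theorem quarticQuot_le_six_div {r : ℝ} (hr : 0 < r) (hr1 : r ≤ 1) : quarticQuot r ≤ 6 / r := by
  rw [quarticQuot, div_le_div_iff_of_pos_right hr]
  nlinarith [pow_le_one₀ hr.le hr1 (n := 2), pow_le_one₀ hr.le hr1 (n := 4)]

theorem tendsto_quarticQuot_atTop : Tendsto quarticQuot atTop atTop :=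
  tendsto_atTop_mono' _ ((eventually_gt_atTop 0).mono fun _ => self_le_quarticQuot) tendsto_id

theorem continuousOn_quarticQuot : ContinuousOn quarticQuot (Ioi 0) :=
  ContinuousOn.div (by fun_prop) continuousOn_id fun _ hr => (mem_Ioi.1 hr).ne'

theorem continuousOn_hFun (Λ K : ℝ) : ContinuousOn (hFun Λ K) (Ioi 0) := by
  have hq := continuousOn_quarticQuot
  refine (continuousOn_const.mul (hq.neg.add ((hq.pow 2).sub continuousOn_const).sqrt)).add ?_
  exact (by fun_prop : Continuous fun r : ℝ => K * r ^ 2).continuousOn.div (by fun_prop)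
    fun r _ => by positivity

theorem tendsto_hFun_atTop (Λ K : ℝ) : Tendsto (hFun Λ K) atTop (𝓝 K) := by
  have hsqrt := (tendsto_neg_add_sqrt_sq_sub_atTop (c := 4) (by norm_num)).comp
    tendsto_quarticQuot_atTop
  have := (hsqrt.const_mul (1 / 2 * Λ)).add (tendsto_mul_sq_div_one_add_sq_atTop K)
  rwa [mul_zero, zero_add] at this

theorem hFun_neg {Λ K r : ℝ} (hK : 0 ≤ K) (hr : 0 < r) (hr1 : r ≤ 1)
    (hrK : 6 * K * r < Λ) : hFun Λ K r < 0 := by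
  have hΛ : 0 ≤ Λ := by nlinarith
  set x := quarticQuot r
  have hx2 : 2 ≤ x := two_le_quarticQuot hr
  have hx : 0 < x := two_pos.trans_le hx2
  have hsqrt : 1 / 2 * Λ * (-x + √(x ^ 2 - 4)) ≤ -(Λ / x) := by
    have := neg_add_sqrt_sq_sub_le_neg_div hx (c := 4) (by nlinarith)
    calc 1 / 2 * Λ * (-x + √(x ^ 2 - 4)) ≤ 1 / 2 * Λ * -(4 / (2 * x)) := by gcongr
      _ = -(Λ / x) := by ring
  have hΛx : Λ * r / 6 ≤ Λ / x := by
    calc Λ * r / 6 = Λ / (6 / r) := by field_simp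
      _ ≤ Λ / x := div_le_div_of_nonneg_left hΛ hx (quarticQuot_le_six_div hr hr1)
  have hrat : K * r ^ 2 / (1 + r ^ 2) ≤ K * r ^ 2 :=
    div_le_self (by positivity) (by nlinarith)
  have : K * r ^ 2 < Λ * r / 6 := by nlinarith
  unfold hFun
  linarith

theorem h_has_positive_root_general
    (Λ : ℝ) (hΛpos : 0 < Λ)
    (K : ℝ) (hK : 0 < K)
    (h : ℝ → ℝ)
    (hh : h = fun r => (1 / 2) * Λ *
        (-((r ^ 4 + 3 * r ^ 2 + 2) / r) +
          Real.sqrt (((r ^ 4 + 3 * r ^ 2 + 2) / r) ^ 2 - 4)) +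
        K * r ^ 2 / (1 + r ^ 2)) :
    (∃ βs : ℝ, 0 < βs ∧ h βs = 0) ∧
    (∃ ε > 0, ∀ r : ℝ, 0 < r → r < ε → h r < 0) ∧
    Tendsto h atTop (nhds K) := by
  obtain rfl : h = hFun Λ K := hh
  set ε := min 1 (Λ / (6 * K))
  have hε : 0 < ε := by positivity
  have hneg (r : ℝ) (hr : 0 < r) (hrε : r < ε) : hFun Λ K r < 0 := by
    refine hFun_neg hK.le hr (hrε.le.trans (min_le_left _ _)) ?_
    have := hrε.trans_le (min_le_right _ _)
    rwa [lt_div_iff₀' (by positivity)] at this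
  have hlim := tendsto_hFun_atTop Λ K
  exact ⟨exists_pos_root_of_continuousOn_Ioi (continuousOn_hFun Λ K) (half_pos hε)
    (hneg _ (half_pos hε) (half_lt_self hε)) (hlim.eventually (eventually_gt_nhds hK)),
    ⟨ε, hε, hneg⟩, hlim⟩

/-- With `Λ > 0` the smallest nonzero eigenvalue of `L + Lᵀ` (for `L` the
Laplacian of a strongly connected, weight-balanced digraph) and `K > 0`, the function
`h(r) = ½Λ(−(r⁴+3r²+2)/r + √(((r⁴+3r²+2)/r)² − 4)) + Kr²/(1+r²)` has a positive root
`β*`, is negative for all sufficiently small `r > 0`, and tends to `K > 0` at `∞`. -/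
theorem h_has_positive_root
    {n : ℕ}
    (A : Matrix (Fin n) (Fin n) ℝ)
    (hA : ∀ i j, 0 ≤ A i j)
    (hconn : ∀ i j : Fin n, i ≠ j → Relation.TransGen (fun a b => 0 < A a b) i j)
    (hbal : ∀ i, ∑ j, A i j = ∑ j, A j i)
    (L : Matrix (Fin n) (Fin n) ℝ)
    (hL : L = Matrix.diagonal (fun i => ∑ j, A i j) - A)
    (Λ : ℝ) (hΛpos : 0 < Λ)
    (hΛeig : ∃ v : Fin n → ℝ, v ≠ 0 ∧ (L + Lᵀ) *ᵥ v = Λ • v)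
    (hΛmin : ∀ (μ : ℝ) (v : Fin n → ℝ), v ≠ 0 → (L + Lᵀ) *ᵥ v = μ • v → μ ≠ 0 → Λ ≤ |μ|)
    (K : ℝ) (hK : 0 < K)
    (h : ℝ → ℝ)
    (hh : h = fun r => (1 / 2) * Λ *
        (-((r ^ 4 + 3 * r ^ 2 + 2) / r) +
          Real.sqrt (((r ^ 4 + 3 * r ^ 2 + 2) / r) ^ 2 - 4)) +
        K * r ^ 2 / (1 + r ^ 2)) :
    (∃ βs : ℝ, 0 < βs ∧ h βs = 0) ∧
    (∃ ε > 0, ∀ r : ℝ, 0 < r → r < ε → h r < 0) ∧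
    Tendsto h atTop (nhds K) :=
  h_has_positive_root_general Λ hΛpos K hK h hh
end

section
/- Let G be a connected undirected graph with Laplacian L, 𝐋 = L ⊗ I_d, and let each f^i be locally Lipschitz and convex. Along any solution of the saddle-point dynamics ẋ ∈ −∂f̃(x) − 𝐋x − 𝐋z, ż = 𝐋x, the function V(x, z) = ½‖x − x*‖² + ½‖z − z*‖² is nonincreasing, where (x*, z*) is any saddle point of F(x,z) = f̃(x) + xᵀ𝐋z + ½xᵀ𝐋x; specifically, every element ξ of the set-valued Lie derivative of V satisfies ξ ≤ F(x*, z) − F(x, z*) ≤ 0. -/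
/-!
Along the flow, the derivative of `V` at `(x, z)` is the Lie derivative
`ξ = (x - x*)ᵀ(-𝐋x - 𝐋z - g) + (z - z*)ᵀ𝐋x` with `g ∈ ∂f̃(x)`. Using the symmetry of `𝐋`,
`F(x*, z) - F(x, z*) - ξ` equals the subgradient gap `f̃(x*) - f̃(x) - gᵀ(x* - x)` plus
`½ (x - x*)ᵀ𝐋(x - x*)`, both nonnegative since `𝐋 = L ⊗ I` is positive semidefinite. The saddle
inequalities give `F(x*, z) ≤ F(x*, z*) ≤ F(x, z*)`, so `ξ ≤ 0` and `V` is antitone.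
-/

open Matrix BigOperators

section

variable {ι : Type*} [Fintype ι]

lemma dotProduct_diagonal_rowSum_sub_mulVec [DecidableEq ι] (W : Matrix ι ι ℝ) (v : ι → ℝ) :
    v ⬝ᵥ ((diagonal (fun i => ∑ j, W i j) - W) *ᵥ v) = ∑ i, ∑ j, W i j * v i * (v i - v j) := by
  rw [sub_mulVec, dotProduct_sub]
  simp only [dotProduct, mulVec_diagonal]
  simp only [mulVec, dotProduct, Finset.sum_mul, Finset.mul_sum, ← Finset.sum_sub_distrib]
  refine Finset.sum_congr rfl fun i _ => Finset.sum_congr rfl fun j _ => by ring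

theorem posSemidef_diagonal_rowSum_sub [DecidableEq ι] {W : Matrix ι ι ℝ} (hW : W.IsSymm)
    (hnn : ∀ i j, 0 ≤ W i j) : (diagonal (fun i => ∑ j, W i j) - W).PosSemidef := by
  refine .of_dotProduct_mulVec_nonneg ?_ fun v => ?_
  · simp only [isHermitian_iff_isSymm, IsSymm, transpose_sub, diagonal_transpose, hW.eq]
  rw [star_trivial, dotProduct_diagonal_rowSum_sub_mulVec]
  have hswap : ∑ i, ∑ j, W i j * v i * (v i - v j) = ∑ i, ∑ j, W i j * v j * (v j - v i) := by
    rw [Finset.sum_comm]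
    simp only [hW.apply]
  have hsq : 0 ≤ ∑ i, ∑ j, W i j * (v i - v j) ^ 2 :=
    Finset.sum_nonneg fun i _ => Finset.sum_nonneg fun j _ => mul_nonneg (hnn i j) (sq_nonneg _)
  have hsplit : ∑ i, ∑ j, W i j * (v i - v j) ^ 2 =
      ∑ i, ∑ j, W i j * v i * (v i - v j) + ∑ i, ∑ j, W i j * v j * (v j - v i) := by
    simp only [← Finset.sum_add_distrib]
    refine Finset.sum_congr rfl fun i _ => Finset.sum_congr rfl fun j _ => by ring
  linarith

lemma dotProduct_mulVec_comm_of_isSymm {M : Matrix ι ι ℝ} (hM : M.IsSymm) (u w : ι → ℝ) :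
    u ⬝ᵥ (M *ᵥ w) = w ⬝ᵥ (M *ᵥ u) := by
  rw [dotProduct_mulVec, ← mulVec_transpose, hM.eq, dotProduct_comm]

theorem HasDerivAt.half_dotProduct_self_sub {x : ℝ → ι → ℝ} {x' : ι → ℝ} {t : ℝ}
    (hx : HasDerivAt x x' t) (c : ι → ℝ) :
    HasDerivAt (fun t => 1 / 2 * ((x t - c) ⬝ᵥ (x t - c))) ((x t - c) ⬝ᵥ x') t := by
  have hsum : HasDerivAt (fun t => ∑ i, (x t i - c i) * (x t i - c i))
      (∑ i, (x' i * (x t i - c i) + (x t i - c i) * x' i)) t :=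
    HasDerivAt.fun_sum fun i _ =>
      ((hasDerivAt_pi.1 hx i).sub_const (c i)).mul ((hasDerivAt_pi.1 hx i).sub_const (c i))
  refine (hsum.const_mul (1 / 2 : ℝ)).congr_deriv ?_
  simp only [dotProduct, Pi.sub_apply, Finset.mul_sum]
  exact Finset.sum_congr rfl fun i _ => by ring

noncomputable def saddleLagrangian (φ : (ι → ℝ) → ℝ) (M : Matrix ι ι ℝ) (X Z : ι → ℝ) : ℝ :=
  φ X + X ⬝ᵥ (M *ᵥ Z) + 1 / 2 * (X ⬝ᵥ (M *ᵥ X))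

theorem lieDerivative_le_saddleLagrangian_sub {φ : (ι → ℝ) → ℝ} {M : Matrix ι ι ℝ}
    (hM : M.PosSemidef) {X g : ι → ℝ} (hg : g ∈ subdiff φ X) (Z Xs Zs : ι → ℝ) :
    (X - Xs) ⬝ᵥ (-(M *ᵥ X) - M *ᵥ Z - g) + (Z - Zs) ⬝ᵥ (M *ᵥ X) ≤
      saddleLagrangian φ M Xs Z - saddleLagrangian φ M X Zs := by
  have hsymm : M.IsSymm := isHermitian_iff_isSymm.1 hM.isHermitian
  have hsub : φ X + g ⬝ᵥ (Xs - X) ≤ φ Xs := hg Xs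
  have hquad : 0 ≤ (X - Xs) ⬝ᵥ (M *ᵥ (X - Xs)) := by
    simpa only [star_trivial] using hM.dotProduct_mulVec_nonneg (X - Xs)
  have hXZ := dotProduct_mulVec_comm_of_isSymm hsymm X Z
  have hXXs := dotProduct_mulVec_comm_of_isSymm hsymm X Xs
  have hXZs := dotProduct_mulVec_comm_of_isSymm hsymm X Zs
  simp only [saddleLagrangian, mulVec_sub, dotProduct_sub, sub_dotProduct, dotProduct_neg,
    dotProduct_comm g] at hsub hquad ⊢
  linarith

end

theorem lyapunov_nonincreasing_undirected_general
    {n d : ℕ}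
    (A : Matrix (Fin n) (Fin n) ℝ)
    (hA : ∀ i j, 0 ≤ A i j)
    (hsym : Aᵀ = A)
    (L : Matrix (Fin n) (Fin n) ℝ)
    (hL : L = Matrix.diagonal (fun i => ∑ j, A i j) - A)
    (BL : Matrix (Fin n × Fin d) (Fin n × Fin d) ℝ)
    (hBL : BL = Matrix.kroneckerMap (· * ·) L (1 : Matrix (Fin d) (Fin d) ℝ))
    (ftil : (Fin n × Fin d → ℝ) → ℝ)
    (F : (Fin n × Fin d → ℝ) → (Fin n × Fin d → ℝ) → ℝ)
    (hF : F = fun X Z => ftil X + X ⬝ᵥ (BL *ᵥ Z) + (1 / 2) * (X ⬝ᵥ (BL *ᵥ X)))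
    (Xs Zs : Fin n × Fin d → ℝ)
    (hsaddle : ∀ X Z, F Xs Z ≤ F Xs Zs ∧ F Xs Zs ≤ F X Zs) :
    (∀ (X Z g : Fin n × Fin d → ℝ), g ∈ subdiff ftil X →
      ((X - Xs) ⬝ᵥ (-(BL *ᵥ X) - BL *ᵥ Z - g) + (Z - Zs) ⬝ᵥ (BL *ᵥ X)
          ≤ F Xs Z - F X Zs ∧ F Xs Z - F X Zs ≤ 0)) ∧
    (∀ (x z g : ℝ → (Fin n × Fin d → ℝ)),
      (∀ t, g t ∈ subdiff ftil (x t)) →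
      (∀ t, HasDerivAt x (-(BL *ᵥ x t) - BL *ᵥ z t - g t) t) →
      (∀ t, HasDerivAt z (BL *ᵥ x t) t) →
      ∀ s t : ℝ, s ≤ t →
        (1 / 2) * ((x t - Xs) ⬝ᵥ (x t - Xs)) + (1 / 2) * ((z t - Zs) ⬝ᵥ (z t - Zs)) ≤
        (1 / 2) * ((x s - Xs) ⬝ᵥ (x s - Xs)) + (1 / 2) * ((z s - Zs) ⬝ᵥ (z s - Zs))) := by
  have hBL_psd : BL.PosSemidef := by
    rw [hBL, hL]
    exact (posSemidef_diagonal_rowSum_sub hsym hA).kronecker PosSemidef.one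
  subst hF
  have hlie : ∀ (X Z g : Fin n × Fin d → ℝ), g ∈ subdiff ftil X →
      (X - Xs) ⬝ᵥ (-(BL *ᵥ X) - BL *ᵥ Z - g) + (Z - Zs) ⬝ᵥ (BL *ᵥ X) ≤
        saddleLagrangian ftil BL Xs Z - saddleLagrangian ftil BL X Zs ∧
      saddleLagrangian ftil BL Xs Z - saddleLagrangian ftil BL X Zs ≤ 0 := fun X Z g hg =>
    ⟨lieDerivative_le_saddleLagrangian_sub hBL_psd hg Z Xs Zs,
      sub_nonpos.2 ((hsaddle X Z).1.trans (hsaddle X Z).2)⟩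
  refine ⟨hlie, fun x z g hg hx hz s t hst => ?_⟩
  refine antitone_of_hasDerivAt_nonpos
    (fun τ => ((hx τ).half_dotProduct_self_sub Xs).add ((hz τ).half_dotProduct_self_sub Zs))
    (fun τ => ?_) hst
  exact (hlie _ _ _ (hg τ)).1.trans (hlie _ _ _ (hg τ)).2

/-- For a connected undirected graph and convex locally Lipschitz `f^i`,
every element `ξ` of the set-valued Lie derivative of
`V(x,z) = ½‖x−x*‖² + ½‖z−z*‖²` along the saddle-point dynamics
`ẋ ∈ −∂f̃(x) − 𝐋x − 𝐋z, ż = 𝐋x` satisfies `ξ ≤ F(x*,z) − F(x,z*) ≤ 0`, where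
`(x*,z*)` is any saddle point of `F`; in particular `V` is nonincreasing along
solutions. -/
theorem lyapunov_nonincreasing_undirected
    {n d : ℕ}
    (A : Matrix (Fin n) (Fin n) ℝ)
    (hA : ∀ i j, 0 ≤ A i j)
    (hsym : Aᵀ = A)
    (hconn : ∀ i j : Fin n, i ≠ j → Relation.TransGen (fun a b => 0 < A a b) i j)
    (L : Matrix (Fin n) (Fin n) ℝ)
    (hL : L = Matrix.diagonal (fun i => ∑ j, A i j) - A)
    (BL : Matrix (Fin n × Fin d) (Fin n × Fin d) ℝ)
    (hBL : BL = Matrix.kroneckerMap (· * ·) L (1 : Matrix (Fin d) (Fin d) ℝ))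
    (f : Fin n → (Fin d → ℝ) → ℝ)
    (hconv : ∀ i, ConvexOn ℝ Set.univ (f i))
    (hlip : ∀ i, LocallyLipschitz (f i))
    (ftil : (Fin n × Fin d → ℝ) → ℝ)
    (hftil : ftil = fun X => ∑ i, f i (fun j => X (i, j)))
    (F : (Fin n × Fin d → ℝ) → (Fin n × Fin d → ℝ) → ℝ)
    (hF : F = fun X Z => ftil X + X ⬝ᵥ (BL *ᵥ Z) + (1 / 2) * (X ⬝ᵥ (BL *ᵥ X)))
    (Xs Zs : Fin n × Fin d → ℝ)
    (hsaddle : ∀ X Z, F Xs Z ≤ F Xs Zs ∧ F Xs Zs ≤ F X Zs) :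
    (∀ (X Z g : Fin n × Fin d → ℝ), g ∈ subdiff ftil X →
      ((X - Xs) ⬝ᵥ (-(BL *ᵥ X) - BL *ᵥ Z - g) + (Z - Zs) ⬝ᵥ (BL *ᵥ X)
          ≤ F Xs Z - F X Zs ∧ F Xs Z - F X Zs ≤ 0)) ∧
    (∀ (x z g : ℝ → (Fin n × Fin d → ℝ)),
      (∀ t, g t ∈ subdiff ftil (x t)) →
      (∀ t, HasDerivAt x (-(BL *ᵥ x t) - BL *ᵥ z t - g t) t) →
      (∀ t, HasDerivAt z (BL *ᵥ x t) t) →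
      ∀ s t : ℝ, s ≤ t →
        (1 / 2) * ((x t - Xs) ⬝ᵥ (x t - Xs)) + (1 / 2) * ((z t - Zs) ⬝ᵥ (z t - Zs)) ≤
        (1 / 2) * ((x s - Xs) ⬝ᵥ (x s - Xs)) + (1 / 2) * ((z s - Zs) ⬝ᵥ (z s - Zs))) :=
  lyapunov_nonincreasing_undirected_general A hA hsym L hL BL hBL ftil F hF Xs Zs hsaddle
end
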